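/- arXiv:2010.04647 — 10 statements merged into one kernel-verified Lean document; each statement's English description precedes it below -/
import Mathlib

section
/- Let h ∈ H. Then ε_T(h, f_T) ≤ ε_S(h, f_S) + d_{HΔH}(μ_S, μ_T) + min( ∫ |f_S(z) − f_T(z)| dμ_S(z), ∫ |f_S(z) − f_T(z)| dμ_T(z) ). (Noiseless population-level generalization bound across domains, classification case.) -/
open MeasureTheory Set

/-- The HΔH-divergence between two measures, for a hypothesis class `H` of
{0,1}-valued functions. -/
noncomputable def dHdH {Z : Type*} [MeasurableSpace Z] (H : Set (Z → ℝ))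
    (μ ν : Measure Z) : ℝ :=
  sSup {x | ∃ g ∈ H, ∃ g' ∈ H,
    x = |(μ {z | g z ≠ g' z}).toReal - (ν {z | g z ≠ g' z}).toReal|}

lemma neSet_measurable {Z : Type*} [MeasurableSpace Z] {g g' : Z → ℝ}
    (hg : Measurable g) (hg' : Measurable g') :
    MeasurableSet {z | g z ≠ g' z} := by
  have : {z | g z ≠ g' z} = (fun z => g z - g' z) ⁻¹' ({0}ᶜ) := by
    ext z; simp [sub_eq_zero]
  rw [this]
  exact (hg.sub hg') (measurableSet_singleton 0).compl

lemma integral_abs_eq {Z : Type*} [MeasurableSpace Z] (μ : Measure Z)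
    [IsProbabilityMeasure μ] {g g' : Z → ℝ}
    (hg : Measurable g) (hg' : Measurable g')
    (vg : ∀ z, g z = 0 ∨ g z = 1) (vg' : ∀ z, g' z = 0 ∨ g' z = 1) :
    ∫ z, |g z - g' z| ∂μ = (μ {z | g z ≠ g' z}).toReal := by
  have heq : ∀ z, |g z - g' z| = Set.indicator {z | g z ≠ g' z} (fun _ => (1:ℝ)) z := by
    intro z
    rcases vg z with h1 | h1 <;> rcases vg' z with h2 | h2 <;>
      simp [Set.indicator, h1, h2]
  calc ∫ z, |g z - g' z| ∂μ
      = ∫ z, Set.indicator {z | g z ≠ g' z} (fun _ => (1:ℝ)) z ∂μ := by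
        exact integral_congr_ae (Filter.Eventually.of_forall heq)
    _ = (μ {z | g z ≠ g' z}).toReal := by
        rw [integral_indicator_const _ (neSet_measurable hg hg')]
        simp; rfl

/-- Noiseless population-level generalization bound across domains
(classification case): `ε_T(h, f_T) ≤ ε_S(h, f_S) + d_{HΔH}(μ_S, μ_T) + min(...)`. -/
theorem stmt_0 {Z : Type*} [MeasurableSpace Z]
    (μS μT : Measure Z) [IsProbabilityMeasure μS] [IsProbabilityMeasure μT]
    (H : Set (Z → ℝ)) (hHne : H.Nonempty)
    (hH : ∀ g ∈ H, Measurable g ∧ ∀ z, g z = 0 ∨ g z = 1)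
    (fS fT : Z → ℝ) (hfS : fS ∈ H) (hfT : fT ∈ H)
    (h : Z → ℝ) (hh : h ∈ H) :
    ∫ z, |h z - fT z| ∂μT ≤
      (∫ z, |h z - fS z| ∂μS) + dHdH H μS μT +
        min (∫ z, |fS z - fT z| ∂μS) (∫ z, |fS z - fT z| ∂μT) := by
  obtain ⟨mh, vh⟩ := hH h hh
  obtain ⟨mS, vS⟩ := hH fS hfS
  obtain ⟨mT, vT⟩ := hH fT hfT
  -- abbreviation
  set A : Measure Z → (Z → ℝ) → (Z → ℝ) → ℝ :=
    fun μ g g' => (μ {z | g z ≠ g' z}).toReal with hA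
  -- rewrite integrals
  rw [integral_abs_eq μT mh mT vh vT, integral_abs_eq μS mh mS vh vS,
      integral_abs_eq μS mS mT vS vT, integral_abs_eq μT mS mT vS vT]
  -- measure triangle inequality
  have tri : ∀ (μ : Measure Z) [IsProbabilityMeasure μ] (a b c : Z → ℝ),
      (μ {z | a z ≠ c z}).toReal ≤ (μ {z | a z ≠ b z}).toReal + (μ {z | b z ≠ c z}).toReal := by
    intro μ _ a b c
    have hsub : {z | a z ≠ c z} ⊆ {z | a z ≠ b z} ∪ {z | b z ≠ c z} := by
      intro z hz
      by_cases hab : a z = b z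
      · right; intro hbc; exact hz (hab.trans hbc)
      · left; exact hab
    have : μ {z | a z ≠ c z} ≤ μ {z | a z ≠ b z} + μ {z | b z ≠ c z} :=
      (measure_mono hsub).trans (measure_union_le _ _)
    have h1 : μ {z | a z ≠ b z} ≠ ⊤ := measure_ne_top _ _
    have h2 : μ {z | b z ≠ c z} ≠ ⊤ := measure_ne_top _ _
    calc (μ {z | a z ≠ c z}).toReal
        ≤ (μ {z | a z ≠ b z} + μ {z | b z ≠ c z}).toReal :=
          ENNReal.toReal_mono (by finiteness) this
      _ = (μ {z | a z ≠ b z}).toReal + (μ {z | b z ≠ c z}).toReal :=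
          ENNReal.toReal_add h1 h2
  -- bddAbove of the sup set
  have hbdd : BddAbove {x | ∃ g ∈ H, ∃ g' ∈ H,
      x = |(μS {z | g z ≠ g' z}).toReal - (μT {z | g z ≠ g' z}).toReal|} := by
    refine ⟨1, ?_⟩
    rintro x ⟨g, _, g', _, rfl⟩
    have h1 : (μS {z | g z ≠ g' z}).toReal ≤ 1 := by
      have := prob_le_one (μ := μS) (s := {z | g z ≠ g' z})
      exact ENNReal.toReal_le_of_le_ofReal one_pos.le (by simpa using this)
    have h2 : (μT {z | g z ≠ g' z}).toReal ≤ 1 := by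
      have := prob_le_one (μ := μT) (s := {z | g z ≠ g' z})
      exact ENNReal.toReal_le_of_le_ofReal one_pos.le (by simpa using this)
    have h1' : 0 ≤ (μS {z | g z ≠ g' z}).toReal := ENNReal.toReal_nonneg
    have h2' : 0 ≤ (μT {z | g z ≠ g' z}).toReal := ENNReal.toReal_nonneg
    rw [abs_le]; constructor <;> linarith
  have hd : ∀ g ∈ H, ∀ g' ∈ H,
      (μT {z | g z ≠ g' z}).toReal ≤ (μS {z | g z ≠ g' z}).toReal + dHdH H μS μT := by
    intro g hg g' hg'
    have hmem : |(μS {z | g z ≠ g' z}).toReal - (μT {z | g z ≠ g' z}).toReal| ∈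
        {x | ∃ g ∈ H, ∃ g' ∈ H,
          x = |(μS {z | g z ≠ g' z}).toReal - (μT {z | g z ≠ g' z}).toReal|} :=
      ⟨g, hg, g', hg', rfl⟩
    have hle := le_csSup hbdd hmem
    have habs : (μT {z | g z ≠ g' z}).toReal - (μS {z | g z ≠ g' z}).toReal ≤
        |(μS {z | g z ≠ g' z}).toReal - (μT {z | g z ≠ g' z}).toReal| := by
      rw [abs_sub_comm]; exact le_abs_self _
    unfold dHdH
    linarith
  have b1 : (μT {z | h z ≠ fT z}).toReal ≤
      (μS {z | h z ≠ fS z}).toReal + dHdH H μS μT + (μS {z | fS z ≠ fT z}).toReal := by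
    have t1 := hd h hh fT hfT
    have t2 := tri μS h fS fT
    linarith
  have b2 : (μT {z | h z ≠ fT z}).toReal ≤
      (μS {z | h z ≠ fS z}).toReal + dHdH H μS μT + (μT {z | fS z ≠ fT z}).toReal := by
    have t1 := tri μT h fS fT
    have t2 := hd h hh fS hfS
    linarith
  rw [min_def]; split_ifs <;> linarith
end

section
/- Let h ∈ H. Then |ε_{μ_S}(h, f_S) − ε_{μ_T}(h, f_T)| ≤ d_{HΔH}(μ_S, μ_T) + min( ∫ |f_S(z) − f_T(z)| dμ_S(z), ∫ |f_S(z) − f_T(z)| dμ_T(z) ). -/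
open MeasureTheory Set

lemma integral_abs_sub_eq {Z : Type*} [MeasurableSpace Z] (μ : Measure Z)
    {g g' : Z → ℝ} (hg : Measurable g) (hg' : Measurable g')
    (h0 : ∀ z, g z = 0 ∨ g z = 1) (h0' : ∀ z, g' z = 0 ∨ g' z = 1) :
    ∫ z, |g z - g' z| ∂μ = (μ {z | g z ≠ g' z}).toReal := by
  have hs : MeasurableSet {z | g z ≠ g' z} :=
    (measurableSet_eq_fun hg hg').compl
  have hfun : ∀ z, |g z - g' z| =
      Set.indicator {z | g z ≠ g' z} (fun _ => (1 : ℝ)) z := by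
    intro z
    by_cases hz : g z = g' z
    · simp [Set.indicator_of_notMem, hz]
    · have hmem : z ∈ {z | g z ≠ g' z} := hz
      rw [Set.indicator_of_mem hmem]
      rcases h0 z with h1 | h1 <;> rcases h0' z with h2 | h2 <;>
        simp_all
  calc ∫ z, |g z - g' z| ∂μ
      = ∫ z, Set.indicator {z | g z ≠ g' z} (fun _ => (1:ℝ)) z ∂μ := by
        exact integral_congr_ae (Filter.Eventually.of_forall hfun)
    _ = (μ {z | g z ≠ g' z}).toReal := by
        rw [MeasureTheory.integral_indicator_const (1:ℝ) hs]; simp [Measure.real]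

/-- `|ε_{μ_S}(h, f_S) − ε_{μ_T}(h, f_T)| ≤ d_{HΔH}(μ_S, μ_T) + min(...)`. -/
theorem stmt_3 {Z : Type*} [MeasurableSpace Z]
    (μS μT : Measure Z) [IsProbabilityMeasure μS] [IsProbabilityMeasure μT]
    (H : Set (Z → ℝ)) (hHne : H.Nonempty)
    (hH : ∀ g ∈ H, Measurable g ∧ ∀ z, g z = 0 ∨ g z = 1)
    (fS fT : Z → ℝ) (hfS : fS ∈ H) (hfT : fT ∈ H)
    (h : Z → ℝ) (hh : h ∈ H) :
    |(∫ z, |h z - fS z| ∂μS) - ∫ z, |h z - fT z| ∂μT| ≤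
      dHdH H μS μT +
        min (∫ z, |fS z - fT z| ∂μS) (∫ z, |fS z - fT z| ∂μT) := by
  obtain ⟨hhm, hh01⟩ := hH h hh
  obtain ⟨hSm, hS01⟩ := hH fS hfS
  obtain ⟨hTm, hT01⟩ := hH fT hfT
  rw [integral_abs_sub_eq μS hhm hSm hh01 hS01,
      integral_abs_sub_eq μT hhm hTm hh01 hT01,
      integral_abs_sub_eq μS hSm hTm hS01 hT01,
      integral_abs_sub_eq μT hSm hTm hS01 hT01]
  set a := (μS {z | h z ≠ fS z}).toReal with ha
  set b := (μT {z | h z ≠ fT z}).toReal with hb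
  set cS := (μS {z | fS z ≠ fT z}).toReal with hcS
  set cT := (μT {z | fS z ≠ fT z}).toReal with hcT
  set D := dHdH H μS μT with hD
  -- generic triangle inequality for measures of disagreement sets
  have tri : ∀ (μ : Measure Z), μ {z | h z ≠ fS z} ≤
      μ {z | h z ≠ fT z} + μ {z | fS z ≠ fT z} := by
    intro μ
    refine le_trans (measure_mono ?_) (measure_union_le _ _)
    intro z hz
    by_cases hzT : h z = fT z
    · right; simp only [mem_setOf_eq] at *; intro hc; exact hz (hzT.trans hc.symm)
    · left; exact hzT
  have tri' : ∀ (μ : Measure Z), μ {z | h z ≠ fT z} ≤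
      μ {z | h z ≠ fS z} + μ {z | fS z ≠ fT z} := by
    intro μ
    refine le_trans (measure_mono ?_) (measure_union_le _ _)
    intro z hz
    by_cases hzS : h z = fS z
    · right; simp only [mem_setOf_eq] at *; intro hc; exact hz (hzS.trans hc)
    · left; exact hzS
  have fin : ∀ (μ : Measure Z) [IsProbabilityMeasure μ] (s : Set Z),
      μ s ≠ ⊤ := fun μ _ s => measure_ne_top μ s
  have toReal_le : ∀ (μ ν : Measure Z) [IsProbabilityMeasure μ]
      [IsProbabilityMeasure ν] (s t u : Set Z), μ s ≤ ν t + μ u →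
      (μ s).toReal ≤ (ν t).toReal + (μ u).toReal := by
    intro μ ν _ _ s t u hle
    rw [← ENNReal.toReal_add (measure_ne_top ν t) (measure_ne_top μ u)]
    exact ENNReal.toReal_mono (by finiteness) hle
  -- bddAbove of the sSup set
  have hbdd : BddAbove {x | ∃ g ∈ H, ∃ g' ∈ H,
      x = |(μS {z | g z ≠ g' z}).toReal - (μT {z | g z ≠ g' z}).toReal|} := by
    refine ⟨2, ?_⟩
    rintro x ⟨g, -, g', -, rfl⟩
    have h1 : (μS {z | g z ≠ g' z}).toReal ≤ 1 := by
      have := prob_le_one (μ := μS) (s := {z | g z ≠ g' z})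
      exact ENNReal.toReal_le_of_le_ofReal one_pos.le (by simpa using this)
    have h2 : (μT {z | g z ≠ g' z}).toReal ≤ 1 := by
      have := prob_le_one (μ := μT) (s := {z | g z ≠ g' z})
      exact ENNReal.toReal_le_of_le_ofReal one_pos.le (by simpa using this)
    have h1' : 0 ≤ (μS {z | g z ≠ g' z}).toReal := ENNReal.toReal_nonneg
    have h2' : 0 ≤ (μT {z | g z ≠ g' z}).toReal := ENNReal.toReal_nonneg
    rw [abs_le]; constructor <;> linarith
  have memD : ∀ g ∈ H, ∀ g' ∈ H,
      |(μS {z | g z ≠ g' z}).toReal - (μT {z | g z ≠ g' z}).toReal| ≤ D := by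
    intro g hg g' hg'
    exact le_csSup hbdd ⟨g, hg, g', hg', rfl⟩
  -- route via μS{h≠fT}
  have route1 : |a - b| ≤ D + cS := by
    set x := (μS {z | h z ≠ fT z}).toReal with hx
    have h1 : |a - x| ≤ cS := by
      rw [abs_sub_le_iff]
      constructor
      · have := toReal_le μS μS _ _ _ (tri μS); linarith
      · have := toReal_le μS μS _ _ _ (tri' μS); linarith
    have h2 : |x - b| ≤ D := memD h hh fT hfT
    calc |a - b| ≤ |a - x| + |x - b| := abs_sub_le a x b
      _ ≤ cS + D := add_le_add h1 h2
      _ = D + cS := add_comm _ _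
  -- route via μT{h≠fS}
  have route2 : |a - b| ≤ D + cT := by
    set y := (μT {z | h z ≠ fS z}).toReal with hy
    have h1 : |a - y| ≤ D := memD h hh fS hfS
    have h2 : |y - b| ≤ cT := by
      rw [abs_sub_le_iff]
      constructor
      · have h3 := toReal_le μT μT _ _ _ (tri μT)
        rw [← hy, ← hb, ← hcT] at h3; linarith
      · have h3 := toReal_le μT μT _ _ _ (tri' μT)
        rw [← hy, ← hb, ← hcT] at h3; linarith
    calc |a - b| ≤ |a - y| + |y - b| := abs_sub_le a y b
      _ ≤ D + cT := add_le_add h1 h2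
  rcases le_total cS cT with hc | hc
  · rwa [min_eq_left hc]
  · rwa [min_eq_right hc]
end

section
/- (Lemma A.2, classification.) For every h ∈ H: |ε_S(h) − ε_T(h)| ≤ (n_S + n_T) + d_{HΔH}(μ_S, μ_T) + min( ∫ |f_S(z) − f_T(z)| dμ_S(z), ∫ |f_S(z) − f_T(z)| dμ_T(z) ). -/
open MeasureTheory Set

section aux
variable {α : Type*} [MeasurableSpace α]

lemma abs_integral_sub_le' (μ : Measure α) {f g b : α → ℝ}
    (hf : Integrable f μ) (hg : Integrable g μ) (hb : Integrable b μ)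
    (hle : ∀ᵐ x ∂μ, |f x - g x| ≤ b x) :
    |(∫ x, f x ∂μ) - ∫ x, g x ∂μ| ≤ ∫ x, b x ∂μ := by
  rw [← integral_sub hf hg]
  calc |∫ x, (f x - g x) ∂μ| ≤ ∫ x, |f x - g x| ∂μ := by
        simpa [Real.norm_eq_abs] using norm_integral_le_integral_norm (fun x => f x - g x)
    _ ≤ ∫ x, b x ∂μ := integral_mono_ae (hf.sub hg).abs hb hle

lemma int01_eq' (μ : Measure α) [IsProbabilityMeasure μ] {g g' : α → ℝ}
    (hg : Measurable g) (hg' : Measurable g')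
    (hg01 : ∀ z, g z = 0 ∨ g z = 1) (hg'01 : ∀ z, g' z = 0 ∨ g' z = 1) :
    ∫ z, |g z - g' z| ∂μ = (μ {z | g z ≠ g' z}).toReal := by
  have heq : (fun z => |g z - g' z|) = Set.indicator {z | g z ≠ g' z} (fun _ => (1:ℝ)) := by
    funext z
    by_cases hzz : g z = g' z
    · simp [Set.indicator, hzz]
    · rcases hg01 z with h0 | h1 <;> rcases hg'01 z with h0' | h1' <;>
        simp_all [Set.indicator]
  have hms : MeasurableSet {z | g z ≠ g' z} := (measurableSet_eq_fun hg hg').compl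
  rw [heq, integral_indicator_const _ hms]
  simp
  rfl

lemma integrable_of_bound' (μ : Measure α) [IsFiniteMeasure μ] {f : α → ℝ}
    (hf : AEStronglyMeasurable f μ) (C : ℝ) (h : ∀ᵐ x ∂μ, |f x| ≤ C) :
    Integrable f μ :=
  (integrable_const C).mono' hf (by simpa using h)

end aux



/-- Lemma A.2 (classification): for every `h ∈ H`,
`|ε_S(h) − ε_T(h)| ≤ (n_S + n_T) + d_{HΔH}(μ_S, μ_T) + min(...)`,
where the risks `ε` are taken under joint distributions `μ̄_S, μ̄_T` on
`Z × {0,1}` with first marginals `μ_S, μ_T`. -/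
theorem stmt_4 {Z : Type*} [MeasurableSpace Z]
    (μS μT : Measure Z) [IsProbabilityMeasure μS] [IsProbabilityMeasure μT]
    (μbarS μbarT : Measure (Z × ℝ))
    [IsProbabilityMeasure μbarS] [IsProbabilityMeasure μbarT]
    (hmS : μbarS.map Prod.fst = μS) (hmT : μbarT.map Prod.fst = μT)
    (hyS : ∀ᵐ p ∂μbarS, p.2 = 0 ∨ p.2 = 1)
    (hyT : ∀ᵐ p ∂μbarT, p.2 = 0 ∨ p.2 = 1)
    (H : Set (Z → ℝ)) (hHne : H.Nonempty)
    (hH : ∀ g ∈ H, Measurable g ∧ ∀ z, g z = 0 ∨ g z = 1)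
    (fS fT : Z → ℝ) (hfS : fS ∈ H) (hfT : fT ∈ H)
    (h : Z → ℝ) (hh : h ∈ H) :
    |(∫ p : Z × ℝ, |h p.1 - p.2| ∂μbarS) - ∫ p : Z × ℝ, |h p.1 - p.2| ∂μbarT| ≤
      ((∫ p : Z × ℝ, |p.2 - fS p.1| ∂μbarS) +
        ∫ p : Z × ℝ, |p.2 - fT p.1| ∂μbarT) +
      dHdH H μS μT +
      min (∫ z, |fS z - fT z| ∂μS) (∫ z, |fS z - fT z| ∂μT) := by
  obtain ⟨hhm, hh01⟩ := hH h hh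
  obtain ⟨hSm, hS01⟩ := hH fS hfS
  obtain ⟨hTm, hT01⟩ := hH fT hfT
  have habs1 : ∀ (g : Z → ℝ), (∀ z, g z = 0 ∨ g z = 1) → ∀ z, |g z| ≤ 1 := by
    intro g hg z; rcases hg z with h0 | h0 <;> simp [h0]
  -- integrability facts
  have measS : ∀ (g : Z → ℝ), Measurable g →
      AEStronglyMeasurable (fun p : Z × ℝ => |h p.1 - g p.1|) μbarS :=
    fun g hg => (((hhm.comp measurable_fst).sub (hg.comp measurable_fst)).abs).aestronglyMeasurable
  have intZ : ∀ (μ : Measure Z), ∀ [IsProbabilityMeasure μ], ∀ (g g' : Z → ℝ),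
      Measurable g → Measurable g' → (∀ z, g z = 0 ∨ g z = 1) → (∀ z, g' z = 0 ∨ g' z = 1) →
      Integrable (fun z => |g z - g' z|) μ := by
    intro μ _ g g' hg hg' hg01 hg'01
    refine integrable_of_bound' μ ((hg.sub hg').abs).aestronglyMeasurable 2 ?_
    filter_upwards with z
    calc |(|g z - g' z|)| = |g z - g' z| := abs_abs _
      _ ≤ |g z| + |g' z| := abs_sub _ _
      _ ≤ 2 := by have := habs1 g hg01 z; have := habs1 g' hg'01 z; linarith
  have intBar : ∀ (μ : Measure (Z × ℝ)), ∀ [IsProbabilityMeasure μ],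
      (∀ᵐ p ∂μ, p.2 = 0 ∨ p.2 = 1) → ∀ (g g' : Z → ℝ),
      Measurable g → (∀ z, g z = 0 ∨ g z = 1) →
      (Integrable (fun p : Z × ℝ => |g p.1 - p.2|) μ ∧
       Integrable (fun p : Z × ℝ => |p.2 - g p.1|) μ ∧
       (Measurable g' → (∀ z, g' z = 0 ∨ g' z = 1) →
        Integrable (fun p : Z × ℝ => |g p.1 - g' p.1|) μ)) := by
    intro μ _ hy g g' hg hg01
    have hb : ∀ᵐ p ∂μ, |g p.1 - p.2| ≤ 2 := by
      filter_upwards [hy] with p hp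
      have h1 := habs1 g hg01 p.1
      have h2 : |p.2| ≤ 1 := by rcases hp with h0 | h0 <;> simp [h0]
      calc |g p.1 - p.2| ≤ |g p.1| + |p.2| := abs_sub _ _
        _ ≤ 2 := by linarith
    refine ⟨?_, ?_, ?_⟩
    · refine integrable_of_bound' μ
        (((hg.comp measurable_fst).sub measurable_snd).abs).aestronglyMeasurable 2 ?_
      filter_upwards [hb] with p hp; simpa using hp
    · refine integrable_of_bound' μ
        ((measurable_snd.sub (hg.comp measurable_fst)).abs).aestronglyMeasurable 2 ?_
      filter_upwards [hb] with p hp; rw [abs_abs, abs_sub_comm]; exact hp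
    · intro hg' hg'01
      refine integrable_of_bound' μ
        (((hg.comp measurable_fst).sub (hg'.comp measurable_fst)).abs).aestronglyMeasurable 2 ?_
      filter_upwards with p
      have h1 := habs1 g hg01 p.1
      have h2 := habs1 g' hg'01 p.1
      rw [abs_abs]
      calc |g p.1 - g' p.1| ≤ |g p.1| + |g' p.1| := abs_sub _ _
        _ ≤ 2 := by linarith
  obtain ⟨iS1, _, iS2⟩ := intBar μbarS hyS h fS hhm hh01
  have iS2 := iS2 hSm hS01
  obtain ⟨_, iS3, _⟩ := intBar μbarS hyS fS fS hSm hS01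
  obtain ⟨iT1, _, iT2⟩ := intBar μbarT hyT h fT hhm hh01
  have iT2 := iT2 hTm hT01
  obtain ⟨_, iT3, _⟩ := intBar μbarT hyT fT fT hTm hT01
  obtain ⟨_, _, iT2'⟩ := intBar μbarT hyT h fS hhm hh01
  have iT2' := iT2' hSm hS01
  -- step 1 : compare risk with risk wrt labeling function
  have pt : ∀ (g : Z → ℝ) (p : Z × ℝ), abs (|h p.1 - p.2| - |h p.1 - g p.1|) ≤ |p.2 - g p.1| := by
    intro g p
    calc abs (|h p.1 - p.2| - |h p.1 - g p.1|) ≤ |(h p.1 - p.2) - (h p.1 - g p.1)| :=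
          abs_abs_sub_abs_le_abs_sub _ _
      _ = |p.2 - g p.1| := by rw [abs_sub_comm]; congr 1; ring
  have step1S : |(∫ p : Z × ℝ, |h p.1 - p.2| ∂μbarS) - ∫ p : Z × ℝ, |h p.1 - fS p.1| ∂μbarS|
      ≤ ∫ p : Z × ℝ, |p.2 - fS p.1| ∂μbarS :=
    abs_integral_sub_le' μbarS iS1 iS2 iS3 (Filter.Eventually.of_forall (pt fS))
  have step1T : |(∫ p : Z × ℝ, |h p.1 - p.2| ∂μbarT) - ∫ p : Z × ℝ, |h p.1 - fT p.1| ∂μbarT|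
      ≤ ∫ p : Z × ℝ, |p.2 - fT p.1| ∂μbarT :=
    abs_integral_sub_le' μbarT iT1 iT2 iT3 (Filter.Eventually.of_forall (pt fT))
  -- step 2 : transfer to marginals
  have mapS : ∀ (g : Z → ℝ), Measurable g →
      ∫ z, |h z - g z| ∂μS = ∫ p : Z × ℝ, |h p.1 - g p.1| ∂μbarS := by
    intro g hg
    rw [← hmS, integral_map (f := fun z => |h z - g z|) measurable_fst.aemeasurable ((hhm.sub hg).abs).aestronglyMeasurable]
  have mapT : ∀ (g : Z → ℝ), Measurable g →
      ∫ z, |h z - g z| ∂μT = ∫ p : Z × ℝ, |h p.1 - g p.1| ∂μbarT := by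
    intro g hg
    rw [← hmT, integral_map (f := fun z => |h z - g z|) measurable_fst.aemeasurable ((hhm.sub hg).abs).aestronglyMeasurable]
  -- step 3 : same-measure label change
  have ptz : ∀ z, abs (|h z - fS z| - |h z - fT z|) ≤ |fS z - fT z| := by
    intro z
    calc abs (|h z - fS z| - |h z - fT z|) ≤ |(h z - fS z) - (h z - fT z)| :=
          abs_abs_sub_abs_le_abs_sub _ _
      _ = |fS z - fT z| := by rw [abs_sub_comm]; congr 1; ring
  have step3S : |(∫ z, |h z - fS z| ∂μS) - ∫ z, |h z - fT z| ∂μS| ≤ ∫ z, |fS z - fT z| ∂μS :=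
    abs_integral_sub_le' μS (intZ μS h fS hhm hSm hh01 hS01) (intZ μS h fT hhm hTm hh01 hT01)
      (intZ μS fS fT hSm hTm hS01 hT01) (Filter.Eventually.of_forall ptz)
  have step3T : |(∫ z, |h z - fS z| ∂μT) - ∫ z, |h z - fT z| ∂μT| ≤ ∫ z, |fS z - fT z| ∂μT :=
    abs_integral_sub_le' μT (intZ μT h fS hhm hSm hh01 hS01) (intZ μT h fT hhm hTm hh01 hT01)
      (intZ μT fS fT hSm hTm hS01 hT01) (Filter.Eventually.of_forall ptz)
  -- step 4 : dHdH bound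
  have bdd : BddAbove {x | ∃ g ∈ H, ∃ g' ∈ H,
      x = |(μS {z | g z ≠ g' z}).toReal - (μT {z | g z ≠ g' z}).toReal|} := by
    refine ⟨1, ?_⟩
    rintro x ⟨g, -, g', -, rfl⟩
    have h1 : (μS {z | g z ≠ g' z}).toReal ≤ 1 := by
      have := ENNReal.toReal_mono (by simp) (prob_le_one (μ := μS) (s := {z | g z ≠ g' z}))
      simpa using this
    have h2 : (μT {z | g z ≠ g' z}).toReal ≤ 1 := by
      have := ENNReal.toReal_mono (by simp) (prob_le_one (μ := μT) (s := {z | g z ≠ g' z}))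
      simpa using this
    have h3 : (0:ℝ) ≤ (μS {z | g z ≠ g' z}).toReal := ENNReal.toReal_nonneg
    have h4 : (0:ℝ) ≤ (μT {z | g z ≠ g' z}).toReal := ENNReal.toReal_nonneg
    rw [abs_sub_le_iff]; constructor <;> linarith
  have step4 : ∀ (g : Z → ℝ), g ∈ H → Measurable g → (∀ z, g z = 0 ∨ g z = 1) →
      |(∫ z, |h z - g z| ∂μS) - ∫ z, |h z - g z| ∂μT| ≤ dHdH H μS μT := by
    intro g hgH hg hg01
    rw [int01_eq' μS hhm hg hh01 hg01, int01_eq' μT hhm hg hh01 hg01]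
    exact le_csSup bdd ⟨h, hh, g, hgH, rfl⟩
  have step4T := step4 fT hfT hTm hT01
  have step4S := step4 fS hfS hSm hS01
  -- combine
  rw [← mapS fS hSm] at step1S
  rw [← mapT fT hTm] at step1T
  set a := ∫ p : Z × ℝ, |h p.1 - p.2| ∂μbarS
  set a' := ∫ p : Z × ℝ, |h p.1 - p.2| ∂μbarT
  set nS := ∫ p : Z × ℝ, |p.2 - fS p.1| ∂μbarS
  set nT := ∫ p : Z × ℝ, |p.2 - fT p.1| ∂μbarT
  set AS := ∫ z, |h z - fS z| ∂μS
  set AT := ∫ z, |h z - fT z| ∂μT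
  set BS := ∫ z, |h z - fT z| ∂μS
  set BT := ∫ z, |h z - fS z| ∂μT
  have route1 : |a - a'| ≤ (nS + nT) + dHdH H μS μT + ∫ z, |fS z - fT z| ∂μS := by
    have t : |a - a'| ≤ |a - AS| + |AS - BS| + |BS - AT| + |AT - a'| := by
      have := abs_sub_le a AS a'
      have := abs_sub_le AS BS a'
      have := abs_sub_le BS AT a'
      linarith
    have e1 : |AT - a'| = |a' - AT| := abs_sub_comm _ _
    rw [e1] at t
    linarith [step1S, step1T, step3S, step4T, t]
  have route2 : |a - a'| ≤ (nS + nT) + dHdH H μS μT + ∫ z, |fS z - fT z| ∂μT := by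
    have t : |a - a'| ≤ |a - AS| + |AS - BT| + |BT - AT| + |AT - a'| := by
      have := abs_sub_le a AS a'
      have := abs_sub_le AS BT a'
      have := abs_sub_le BT AT a'
      linarith
    have e1 : |AT - a'| = |a' - AT| := abs_sub_comm _ _
    rw [e1] at t
    have e2 : |BT - AT| = |(∫ z, |h z - fS z| ∂μT) - ∫ z, |h z - fT z| ∂μT| := rfl
    linarith [step1S, step1T, step3T, step4S, t]
  rcases le_total (∫ z, |fS z - fT z| ∂μS) (∫ z, |fS z - fT z| ∂μT) with hmin | hmin
  · rw [min_eq_left hmin]; exact route1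
  · rw [min_eq_right hmin]; exact route2
end

section
/- (Lemma A.5, regression.) For all h, h' ∈ H, |ε_{μ_S}(h, h') − ε_{μ_T}(h, h')| ≤ d_H̃(μ_S, μ_T). -/
open MeasureTheory Set

/-- The discrepancy `d_H̃` over the class of threshold indicators of pairwise
differences of functions in `H`. -/
noncomputable def dHt {Z : Type*} [MeasurableSpace Z] (H : Set (Z → ℝ))
    (μ ν : Measure Z) : ℝ :=
  sSup {x | ∃ g ∈ H, ∃ g' ∈ H, ∃ t ∈ Icc (0 : ℝ) 1,
    x = |(μ {z | t < |g z - g' z|}).toReal - (ν {z | t < |g z - g' z|}).toReal|}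

/-- Lemma A.5 (regression): for all `h, h' ∈ H`,
`|ε_{μ_S}(h, h') − ε_{μ_T}(h, h')| ≤ d_H̃(μ_S, μ_T)`. -/
theorem stmt_6 {Z : Type*} [MeasurableSpace Z]
    (μS μT : Measure Z) [IsProbabilityMeasure μS] [IsProbabilityMeasure μT]
    (H : Set (Z → ℝ)) (hHne : H.Nonempty)
    (hH : ∀ g ∈ H, Measurable g ∧ ∀ z, g z ∈ Icc (0 : ℝ) 1)
    (h h' : Z → ℝ) (hh : h ∈ H) (hh' : h' ∈ H) :
    |(∫ z, |h z - h' z| ∂μS) - ∫ z, |h z - h' z| ∂μT| ≤ dHt H μS μT := by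
  set f : Z → ℝ := fun z => |h z - h' z| with hf
  have hhm := (hH h hh).1
  have hh'm := (hH h' hh').1
  have hfm : Measurable f := (hhm.sub hh'm).abs
  have hf0 : ∀ z, 0 ≤ f z := fun z => abs_nonneg _
  have hf1 : ∀ z, f z ≤ 1 := by
    intro z
    have h1 := (hH h hh).2 z
    have h2 := (hH h' hh').2 z
    rw [abs_sub_le_iff]
    constructor <;> linarith [h1.1, h1.2, h2.1, h2.2]
  -- integrability of f
  have hint : ∀ (μ : Measure Z) [IsProbabilityMeasure μ], Integrable f μ := by
    intro μ _
    refine ⟨hfm.aestronglyMeasurable, HasFiniteIntegral.of_bounded (C := 1) ?_⟩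
    exact ae_of_all _ fun z => by rw [Real.norm_eq_abs, abs_of_nonneg (hf0 z)]; exact hf1 z
  -- layer cake for each measure, restricted to Ioc 0 1
  have key : ∀ (μ : Measure Z) [IsProbabilityMeasure μ],
      ∫ z, f z ∂μ = ∫ t in Ioc (0:ℝ) 1, (μ {z | t < f z}).toReal := by
    intro μ _
    rw [(hint μ).integral_eq_integral_meas_lt (ae_of_all _ hf0)]
    rw [setIntegral_eq_of_subset_of_forall_diff_eq_zero measurableSet_Ioi (Ioc_subset_Ioi_self : Ioc (0:ℝ) 1 ⊆ Ioi 0)]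
    · rfl
    intro t ht
    have h1t : (1:ℝ) < t := by
      simp only [mem_diff, mem_Ioi, mem_Ioc, not_and, not_le] at ht
      exact ht.2 ht.1
    have : {z | t < f z} = ∅ := by
      ext z; simp only [mem_setOf_eq, mem_empty_iff_false, iff_false, not_lt]
      exact (hf1 z).trans h1t.le
    simp [this]
  -- the measure functions
  set FS : ℝ → ℝ := fun t => (μS {z | t < f z}).toReal with hFS
  set FT : ℝ → ℝ := fun t => (μT {z | t < f z}).toReal with hFT
  have hanti : ∀ (μ : Measure Z) [IsProbabilityMeasure μ],
      Antitone (fun t => (μ {z | t < f z}).toReal) := by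
    intro μ _ a b hab
    exact ENNReal.toReal_mono (measure_ne_top _ _)
      (measure_mono fun z hz => lt_of_le_of_lt hab hz)
  have hFSint : IntegrableOn FS (Ioc (0:ℝ) 1) := by
    refine ⟨((hanti μS).measurable).aestronglyMeasurable, HasFiniteIntegral.of_bounded (C := 1) ?_⟩
    refine ae_of_all _ fun t => ?_
    rw [Real.norm_eq_abs, abs_of_nonneg ENNReal.toReal_nonneg]
    exact ENNReal.toReal_le_of_le_ofReal one_pos.le (by simpa using prob_le_one)
  have hFTint : IntegrableOn FT (Ioc (0:ℝ) 1) := by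
    refine ⟨((hanti μT).measurable).aestronglyMeasurable, HasFiniteIntegral.of_bounded (C := 1) ?_⟩
    refine ae_of_all _ fun t => ?_
    rw [Real.norm_eq_abs, abs_of_nonneg ENNReal.toReal_nonneg]
    exact ENNReal.toReal_le_of_le_ofReal one_pos.le (by simpa using prob_le_one)
  have hdiff : (∫ z, f z ∂μS) - ∫ z, f z ∂μT = ∫ t in Ioc (0:ℝ) 1, (FS t - FT t) := by
    rw [key μS, key μT, integral_sub hFSint hFTint]
  -- the set is bounded above
  have hbdd : BddAbove {x | ∃ g ∈ H, ∃ g' ∈ H, ∃ t ∈ Icc (0 : ℝ) 1,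
      x = |(μS {z | t < |g z - g' z|}).toReal - (μT {z | t < |g z - g' z|}).toReal|} := by
    refine ⟨2, fun x hx => ?_⟩
    obtain ⟨g, -, g', -, t, -, rfl⟩ := hx
    have hS : (μS {z | t < |g z - g' z|}).toReal ≤ 1 :=
      ENNReal.toReal_le_of_le_ofReal one_pos.le (by simpa using prob_le_one)
    have hT : (μT {z | t < |g z - g' z|}).toReal ≤ 1 :=
      ENNReal.toReal_le_of_le_ofReal one_pos.le (by simpa using prob_le_one)
    have := abs_sub_abs_le_abs_sub (μS {z | t < |g z - g' z|}).toReal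
      (μT {z | t < |g z - g' z|}).toReal
    rw [abs_sub_le_iff]
    constructor <;>
      nlinarith [ENNReal.toReal_nonneg (a := μS {z | t < |g z - g' z|}),
        ENNReal.toReal_nonneg (a := μT {z | t < |g z - g' z|})]
  -- pointwise bound by dHt
  have hpt : ∀ t ∈ Ioc (0:ℝ) 1, |FS t - FT t| ≤ dHt H μS μT := by
    intro t ht
    apply le_csSup hbdd
    exact ⟨h, hh, h', hh', t, ⟨ht.1.le, ht.2⟩, rfl⟩
  calc |(∫ z, f z ∂μS) - ∫ z, f z ∂μT|
      = ‖∫ t in Ioc (0:ℝ) 1, (FS t - FT t)‖ := by rw [hdiff, Real.norm_eq_abs]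
    _ ≤ dHt H μS μT * (volume (Ioc (0:ℝ) 1)).toReal := by
        refine norm_setIntegral_le_of_norm_le_const_ae' ?_ (ae_of_all _ fun t ht => ?_)
        · simp
        · rw [Real.norm_eq_abs]; exact hpt t ht
    _ = dHt H μS μT := by simp
end

section
/- Let h ∈ H. Then |ε_{μ_S}(h, f_S) − ε_{μ_T}(h, f_T)| ≤ d_H̃(μ_S, μ_T) + min( ∫ |f_S(z) − f_T(z)| dμ_S(z), ∫ |f_S(z) − f_T(z)| dμ_T(z) ). -/
open MeasureTheory Set

section Aux

variable {Z : Type*} [MeasurableSpace Z]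

lemma aux_integrable (μ : Measure Z) [IsProbabilityMeasure μ] {g : Z → ℝ}
    (hm : Measurable g) (hb : ∀ z, |g z| ≤ 2) : Integrable g μ := by
  refine ⟨hm.aestronglyMeasurable, ?_⟩
  apply HasFiniteIntegral.of_bounded (C := 2)
  filter_upwards with z using hb z

lemma aux_diff_int (μ : Measure Z) [IsProbabilityMeasure μ]
    (H : Set (Z → ℝ)) (hH : ∀ g ∈ H, Measurable g ∧ ∀ z, g z ∈ Icc (0 : ℝ) 1)
    {g g' : Z → ℝ} (hg : g ∈ H) (hg' : g' ∈ H) :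
    Integrable (fun z => |g z - g' z|) μ := by
  obtain ⟨hm, hb⟩ := hH g hg
  obtain ⟨hm', hb'⟩ := hH g' hg'
  refine aux_integrable μ ((hm.sub hm').abs) fun z => ?_
  rw [abs_abs]
  have h1 := hb z; have h2 := hb' z
  simp only [mem_Icc] at h1 h2
  rw [abs_sub_le_iff]; constructor <;> linarith

/-- Key: for `g, g' ∈ H`, `|∫ |g-g'| dμS - ∫ |g-g'| dμT| ≤ dHt H μS μT`. -/
lemma aux_key (μS μT : Measure Z) [IsProbabilityMeasure μS] [IsProbabilityMeasure μT]
    (H : Set (Z → ℝ)) (hH : ∀ g ∈ H, Measurable g ∧ ∀ z, g z ∈ Icc (0 : ℝ) 1)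
    {g g' : Z → ℝ} (hg : g ∈ H) (hg' : g' ∈ H) :
    |(∫ z, |g z - g' z| ∂μS) - ∫ z, |g z - g' z| ∂μT| ≤ dHt H μS μT := by
  set k : Z → ℝ := fun z => |g z - g' z| with hk
  obtain ⟨hm, hb⟩ := hH g hg
  obtain ⟨hm', hb'⟩ := hH g' hg'
  have hk1 : ∀ z, k z ≤ 1 := by
    intro z
    have h1 := hb z; have h2 := hb' z
    simp only [mem_Icc] at h1 h2
    rw [hk]; rw [abs_sub_le_iff]; constructor <;> linarith
  have hknn : ∀ z, 0 ≤ k z := fun z => abs_nonneg _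
  -- the layer functions
  set FS : ℝ → ℝ := fun t => (μS {z | t < k z}).toReal with hFS
  set FT : ℝ → ℝ := fun t => (μT {z | t < k z}).toReal with hFT
  have layer : ∀ (μ : Measure Z), IsProbabilityMeasure μ →
      (∫ z, k z ∂μ) = ∫ t in Ioc (0:ℝ) 1, (μ {z | t < k z}).toReal := by
    intro μ hμ
    have hint : Integrable k μ := aux_diff_int μ H hH hg hg'
    rw [hint.integral_eq_integral_meas_lt (Filter.Eventually.of_forall hknn)]
    simp only [measureReal_def]
    have hsplit : Ioc (0:ℝ) 1 ∪ Ioi 1 = Ioi 0 := Ioc_union_Ioi_eq_Ioi zero_le_one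
    have hzero : ∀ t ∈ Ioi (1:ℝ), (μ {z | t < k z}).toReal = 0 := by
      intro t ht
      have : {z | t < k z} = ∅ := by
        ext z; simp only [mem_setOf_eq, mem_empty_iff_false, iff_false, not_lt]
        exact (hk1 z).trans (le_of_lt ht)
      simp [this]
    have hanti : Antitone (fun t => (μ {z | t < k z}).toReal) := by
      intro s t hst
      apply ENNReal.toReal_le_toReal (measure_ne_top _ _) (measure_ne_top _ _) |>.mpr
      exact measure_mono fun z hz => lt_of_le_of_lt hst hz
    have hintIoc : IntegrableOn (fun t => (μ {z | t < k z}).toReal) (Ioc (0:ℝ) 1) := by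
      refine ⟨(hanti.measurable).aestronglyMeasurable, ?_⟩
      apply HasFiniteIntegral.of_bounded (C := 1)
      filter_upwards with t
      rw [Real.norm_eq_abs, abs_of_nonneg ENNReal.toReal_nonneg]
      exact ENNReal.toReal_le_of_le_ofReal zero_le_one (by simpa using prob_le_one)
    have hintIoi : IntegrableOn (fun t => (μ {z | t < k z}).toReal) (Ioi (1:ℝ)) := by
      apply (integrableOn_congr_fun (fun t ht => (hzero t ht).symm) measurableSet_Ioi).mp
      exact integrableOn_zero
    rw [← hsplit, setIntegral_union (Ioc_disjoint_Ioi le_rfl) measurableSet_Ioi hintIoc hintIoi]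
    rw [setIntegral_congr_fun measurableSet_Ioi hzero]
    simp
  rw [layer μS inferInstance, layer μT inferInstance]
  -- properties of dHt
  have hbdd : BddAbove {x | ∃ g ∈ H, ∃ g' ∈ H, ∃ t ∈ Icc (0 : ℝ) 1,
      x = |(μS {z | t < |g z - g' z|}).toReal - (μT {z | t < |g z - g' z|}).toReal|} := by
    refine ⟨1, fun x hx => ?_⟩
    obtain ⟨a, _, b, _, t, _, rfl⟩ := hx
    have h1 : (μS {z | t < |a z - b z|}).toReal ≤ 1 :=
      ENNReal.toReal_le_of_le_ofReal zero_le_one (by simpa using prob_le_one)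
    have h2 : (μT {z | t < |a z - b z|}).toReal ≤ 1 :=
      ENNReal.toReal_le_of_le_ofReal zero_le_one (by simpa using prob_le_one)
    rw [abs_sub_le_iff]
    constructor <;> [linarith [ENNReal.toReal_nonneg (a := μT {z | t < |a z - b z|})];
      linarith [ENNReal.toReal_nonneg (a := μS {z | t < |a z - b z|})]]
  have hmem : ∀ t ∈ Icc (0:ℝ) 1, |FS t - FT t| ≤ dHt H μS μT := by
    intro t ht
    exact le_csSup hbdd ⟨g, hg, g', hg', t, ht, rfl⟩
  -- combine
  have hintS : IntegrableOn FS (Ioc (0:ℝ) 1) := by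
    have hanti : Antitone FS := fun s t hst =>
      (ENNReal.toReal_le_toReal (measure_ne_top _ _) (measure_ne_top _ _)).mpr
        (measure_mono fun z hz => lt_of_le_of_lt hst hz)
    refine ⟨hanti.measurable.aestronglyMeasurable, ?_⟩
    apply HasFiniteIntegral.of_bounded (C := 1)
    filter_upwards with t
    rw [Real.norm_eq_abs, abs_of_nonneg ENNReal.toReal_nonneg]
    exact ENNReal.toReal_le_of_le_ofReal zero_le_one (by simpa using prob_le_one)
  have hintT : IntegrableOn FT (Ioc (0:ℝ) 1) := by
    have hanti : Antitone FT := fun s t hst =>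
      (ENNReal.toReal_le_toReal (measure_ne_top _ _) (measure_ne_top _ _)).mpr
        (measure_mono fun z hz => lt_of_le_of_lt hst hz)
    refine ⟨hanti.measurable.aestronglyMeasurable, ?_⟩
    apply HasFiniteIntegral.of_bounded (C := 1)
    filter_upwards with t
    rw [Real.norm_eq_abs, abs_of_nonneg ENNReal.toReal_nonneg]
    exact ENNReal.toReal_le_of_le_ofReal zero_le_one (by simpa using prob_le_one)
  rw [← integral_sub hintS hintT]
  calc |∫ t in Ioc (0:ℝ) 1, (FS t - FT t)| ≤ dHt H μS μT * (volume (Ioc (0:ℝ) 1)).toReal := by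
        rw [← Real.norm_eq_abs]
        apply norm_setIntegral_le_of_norm_le_const (by simp)
        · intro t ht
          rw [Real.norm_eq_abs]
          exact hmem t ⟨le_of_lt ht.1, ht.2⟩
    _ = dHt H μS μT := by simp

/-- `|∫|h-f| dμ - ∫|h-g| dμ| ≤ ∫|f-g| dμ`. -/
lemma aux_tri (μ : Measure Z) [IsProbabilityMeasure μ]
    (H : Set (Z → ℝ)) (hH : ∀ g ∈ H, Measurable g ∧ ∀ z, g z ∈ Icc (0 : ℝ) 1)
    {h f g : Z → ℝ} (hh : h ∈ H) (hf : f ∈ H) (hg : g ∈ H) :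
    |(∫ z, |h z - f z| ∂μ) - ∫ z, |h z - g z| ∂μ| ≤ ∫ z, |f z - g z| ∂μ := by
  rw [← integral_sub (aux_diff_int μ H hH hh hf) (aux_diff_int μ H hH hh hg)]
  calc |∫ z, (|h z - f z| - |h z - g z|) ∂μ|
      ≤ ∫ z, |(|h z - f z| - |h z - g z|)| ∂μ := by
        rw [← Real.norm_eq_abs]
        simpa [Real.norm_eq_abs] using
          norm_integral_le_integral_norm (fun z => |h z - f z| - |h z - g z|) (μ := μ)
    _ ≤ ∫ z, |f z - g z| ∂μ := by
        apply integral_mono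
        · exact ((aux_diff_int μ H hH hh hf).sub (aux_diff_int μ H hH hh hg)).abs
        · exact aux_diff_int μ H hH hf hg
        · intro z
          calc |(|h z - f z| - |h z - g z|)| ≤ |(h z - f z) - (h z - g z)| :=
                abs_abs_sub_abs_le_abs_sub _ _
            _ = |f z - g z| := by rw [show (h z - f z) - (h z - g z) = -(f z - g z) by ring,
                abs_neg]

end Aux

/-- `|ε_{μ_S}(h, f_S) − ε_{μ_T}(h, f_T)| ≤ d_H̃(μ_S, μ_T) + min(...)`
(regression case). -/
theorem stmt_7 {Z : Type*} [MeasurableSpace Z]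
    (μS μT : Measure Z) [IsProbabilityMeasure μS] [IsProbabilityMeasure μT]
    (H : Set (Z → ℝ)) (hHne : H.Nonempty)
    (hH : ∀ g ∈ H, Measurable g ∧ ∀ z, g z ∈ Icc (0 : ℝ) 1)
    (fS fT : Z → ℝ) (hfS : fS ∈ H) (hfT : fT ∈ H)
    (h : Z → ℝ) (hh : h ∈ H) :
    |(∫ z, |h z - fS z| ∂μS) - ∫ z, |h z - fT z| ∂μT| ≤
      dHt H μS μT +
        min (∫ z, |fS z - fT z| ∂μS) (∫ z, |fS z - fT z| ∂μT) := by
  have h1 : |(∫ z, |h z - fS z| ∂μS) - ∫ z, |h z - fT z| ∂μT| ≤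
      dHt H μS μT + ∫ z, |fS z - fT z| ∂μS := by
    calc |(∫ z, |h z - fS z| ∂μS) - ∫ z, |h z - fT z| ∂μT|
        ≤ |(∫ z, |h z - fS z| ∂μS) - ∫ z, |h z - fT z| ∂μS| +
          |(∫ z, |h z - fT z| ∂μS) - ∫ z, |h z - fT z| ∂μT| := abs_sub_le _ _ _
      _ ≤ (∫ z, |fS z - fT z| ∂μS) + dHt H μS μT :=
          add_le_add (aux_tri μS H hH hh hfS hfT) (aux_key μS μT H hH hh hfT)
      _ = dHt H μS μT + ∫ z, |fS z - fT z| ∂μS := add_comm _ _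
  have h2 : |(∫ z, |h z - fS z| ∂μS) - ∫ z, |h z - fT z| ∂μT| ≤
      dHt H μS μT + ∫ z, |fS z - fT z| ∂μT := by
    calc |(∫ z, |h z - fS z| ∂μS) - ∫ z, |h z - fT z| ∂μT|
        ≤ |(∫ z, |h z - fS z| ∂μS) - ∫ z, |h z - fS z| ∂μT| +
          |(∫ z, |h z - fS z| ∂μT) - ∫ z, |h z - fT z| ∂μT| := abs_sub_le _ _ _
      _ ≤ dHt H μS μT + ∫ z, |fS z - fT z| ∂μT :=
          add_le_add (aux_key μS μT H hH hh hfS) (aux_tri μT H hH hh hfS hfT)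
  rcases le_total (∫ z, |fS z - fT z| ∂μS) (∫ z, |fS z - fT z| ∂μT) with hle | hle
  · rwa [min_eq_left hle]
  · rwa [min_eq_right hle]
end

section
/- (Lemma A.6, regression.) For every h ∈ H: |ε_S(h) − ε_T(h)| ≤ (n_S + n_T) + d_H̃(μ_S, μ_T) + min( ∫ |f_S(z) − f_T(z)| dμ_S(z), ∫ |f_S(z) − f_T(z)| dμ_T(z) ). -/
open MeasureTheory Set

lemma integrable_of_bdd {α : Type*} [MeasurableSpace α] (μ : Measure α) [IsFiniteMeasure μ]
    {f : α → ℝ} (hf : AEStronglyMeasurable f μ) (C : ℝ) (hC : ∀ x, |f x| ≤ C) :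
    Integrable f μ :=
  (integrable_const C).mono' hf (Filter.Eventually.of_forall fun x => by
    simpa using hC x)

lemma abs_int_abs_sub {α : Type*} [MeasurableSpace α] (μ : Measure α) {u v : α → ℝ}
    (hu : Integrable u μ) (hv : Integrable v μ) :
    |(∫ x, |u x| ∂μ) - ∫ x, |v x| ∂μ| ≤ ∫ x, |u x - v x| ∂μ := by
  rw [← integral_sub hu.abs hv.abs]
  calc |∫ x, (|u x| - |v x|) ∂μ| ≤ ∫ x, abs (|u x| - |v x|) ∂μ := by
        simpa [Real.norm_eq_abs] using
          norm_integral_le_integral_norm (fun x => |u x| - |v x|) (μ := μ)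
    _ ≤ ∫ x, |u x - v x| ∂μ :=
        integral_mono (hu.abs.sub hv.abs).abs (hu.sub hv).abs
          (fun x => abs_abs_sub_abs_le_abs_sub _ _)

lemma layer {Z : Type*} [MeasurableSpace Z] (μ : Measure Z) [IsProbabilityMeasure μ]
    {φ : Z → ℝ} (hm : Measurable φ) (h0 : ∀ z, 0 ≤ φ z) (h1 : ∀ z, φ z ≤ 1) :
    ∫ z, φ z ∂μ = ∫ t in Ioc (0:ℝ) 1, (μ {z | t < φ z}).toReal := by
  have hint : Integrable φ μ := integrable_of_bdd μ hm.aestronglyMeasurable 1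
    (fun z => abs_le.mpr ⟨by linarith [h0 z], h1 z⟩)
  rw [hint.integral_eq_integral_meas_lt (Filter.Eventually.of_forall h0)]
  rw [setIntegral_eq_of_subset_of_ae_diff_eq_zero nullMeasurableSet_Ioi
    (Ioc_subset_Ioi_self : Ioc (0:ℝ) 1 ⊆ Ioi 0) ?_]
  · rfl
  apply Filter.Eventually.of_forall (fun t ht => ?_)
  have htM : 1 < t := by
    simp only [mem_diff, mem_Ioi, mem_Ioc, not_and, not_le] at ht
    exact ht.2 ht.1
  have : {z | t < φ z} = ∅ := by
    ext z; simp only [mem_setOf_eq, mem_empty_iff_false, iff_false, not_lt]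
    linarith [h1 z]
  simp [this]

lemma key_dHt {Z : Type*} [MeasurableSpace Z] (μS μT : Measure Z)
    [IsProbabilityMeasure μS] [IsProbabilityMeasure μT]
    (H : Set (Z → ℝ)) (hH : ∀ g ∈ H, Measurable g ∧ ∀ z, g z ∈ Icc (0 : ℝ) 1)
    {g g' : Z → ℝ} (hg : g ∈ H) (hg' : g' ∈ H) :
    |(∫ z, |g z - g' z| ∂μS) - ∫ z, |g z - g' z| ∂μT| ≤ dHt H μS μT := by
  set φ : Z → ℝ := fun z => |g z - g' z| with hφ
  have hm : Measurable φ := ((hH g hg).1.sub (hH g' hg').1).abs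
  have h0 : ∀ z, 0 ≤ φ z := fun z => abs_nonneg _
  have h1 : ∀ z, φ z ≤ 1 := fun z => by
    have a := (hH g hg).2 z
    have b := (hH g' hg').2 z
    simp only [mem_Icc] at a b
    exact abs_le.mpr ⟨by linarith [a.1, a.2, b.1, b.2], by linarith [a.1, a.2, b.1, b.2]⟩
  have mF : ∀ (μ : Measure Z), Measurable fun t : ℝ => (μ {z | t < φ z}).toReal := by
    intro μ
    have anti : Antitone fun t : ℝ => μ {z | t < φ z} := fun s t hst =>
      measure_mono fun z hz => lt_of_le_of_lt hst hz
    exact anti.measurable.ennreal_toReal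
  have bF : ∀ (μ : Measure Z) [IsProbabilityMeasure μ] (t : ℝ),
      (μ {z | t < φ z}).toReal ∈ Icc (0:ℝ) 1 := by
    intro μ _ t
    refine ⟨ENNReal.toReal_nonneg, ?_⟩
    have : μ {z | t < φ z} ≤ 1 := prob_le_one
    simpa using ENNReal.toReal_mono (by simp) this
  haveI : IsFiniteMeasure (volume.restrict (Ioc (0:ℝ) 1)) := by
    constructor
    rw [Measure.restrict_apply_univ, Real.volume_Ioc]
    simp
  have intF : ∀ (μ : Measure Z) [IsProbabilityMeasure μ],
      IntegrableOn (fun t : ℝ => (μ {z | t < φ z}).toReal) (Ioc 0 1) volume := by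
    intro μ _
    exact integrable_of_bdd _ (mF μ).aestronglyMeasurable 1
      (fun t => abs_le.mpr ⟨by linarith [(bF μ t).1], (bF μ t).2⟩)
  have hdb : BddAbove {x | ∃ g ∈ H, ∃ g' ∈ H, ∃ t ∈ Icc (0 : ℝ) 1,
      x = |(μS {z | t < |g z - g' z|}).toReal - (μT {z | t < |g z - g' z|}).toReal|} := by
    refine ⟨1, ?_⟩
    rintro x ⟨a, _, b, _, t, _, rfl⟩
    have h1 : (μS {z | t < |a z - b z|}).toReal ∈ Icc (0:ℝ) 1 := by
      refine ⟨ENNReal.toReal_nonneg, ?_⟩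
      simpa using ENNReal.toReal_mono (by simp) (prob_le_one (μ := μS))
    have h2 : (μT {z | t < |a z - b z|}).toReal ∈ Icc (0:ℝ) 1 := by
      refine ⟨ENNReal.toReal_nonneg, ?_⟩
      simpa using ENNReal.toReal_mono (by simp) (prob_le_one (μ := μT))
    rw [abs_le]; exact ⟨by linarith [h1.1, h1.2, h2.1, h2.2], by linarith [h1.1, h1.2, h2.1, h2.2]⟩
  rw [layer μS hm h0 h1, layer μT hm h0 h1, ← integral_sub (intF μS) (intF μT)]
  calc |∫ t in Ioc (0:ℝ) 1, ((μS {z | t < φ z}).toReal - (μT {z | t < φ z}).toReal)|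
      ≤ dHt H μS μT * (volume (Ioc (0:ℝ) 1)).toReal := by
        refine norm_setIntegral_le_of_norm_le_const (μ := volume) (s := Ioc (0:ℝ) 1)
          (f := fun t : ℝ => (μS {z | t < φ z}).toReal - (μT {z | t < φ z}).toReal) (by simp [Real.volume_Ioc]) ?_
        intro t ht
        rw [Real.norm_eq_abs]
        exact le_csSup hdb ⟨g, hg, g', hg', t, ⟨le_of_lt ht.1, ht.2⟩, rfl⟩
    _ = dHt H μS μT := by rw [Real.volume_Ioc]; simp

/-- Lemma A.6 (regression): for every `h ∈ H`,
`|ε_S(h) − ε_T(h)| ≤ (n_S + n_T) + d_H̃(μ_S, μ_T) + min(...)`, where the risks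
are taken under joint distributions `μ̄_S, μ̄_T` on `Z × ℝ` with first
marginals `μ_S, μ_T` and integrable label coordinate. -/
theorem stmt_8 {Z : Type*} [MeasurableSpace Z]
    (μS μT : Measure Z) [IsProbabilityMeasure μS] [IsProbabilityMeasure μT]
    (μbarS μbarT : Measure (Z × ℝ))
    [IsProbabilityMeasure μbarS] [IsProbabilityMeasure μbarT]
    (hmS : μbarS.map Prod.fst = μS) (hmT : μbarT.map Prod.fst = μT)
    (hyS : Integrable (fun p : Z × ℝ => p.2) μbarS)
    (hyT : Integrable (fun p : Z × ℝ => p.2) μbarT)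
    (H : Set (Z → ℝ)) (hHne : H.Nonempty)
    (hH : ∀ g ∈ H, Measurable g ∧ ∀ z, g z ∈ Icc (0 : ℝ) 1)
    (fS fT : Z → ℝ) (hfS : fS ∈ H) (hfT : fT ∈ H)
    (h : Z → ℝ) (hh : h ∈ H) :
    |(∫ p : Z × ℝ, |h p.1 - p.2| ∂μbarS) - ∫ p : Z × ℝ, |h p.1 - p.2| ∂μbarT| ≤
      ((∫ p : Z × ℝ, |p.2 - fS p.1| ∂μbarS) +
        ∫ p : Z × ℝ, |p.2 - fT p.1| ∂μbarT) +
      dHt H μS μT +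
      min (∫ z, |fS z - fT z| ∂μS) (∫ z, |fS z - fT z| ∂μT) := by
  obtain ⟨hhm, hhb⟩ := hH h hh
  obtain ⟨hfSm, hfSb⟩ := hH fS hfS
  obtain ⟨hfTm, hfTb⟩ := hH fT hfT
  -- integrability of the compositions on the product spaces
  have ibar : ∀ (μ : Measure (Z × ℝ)) [IsProbabilityMeasure μ] (g : Z → ℝ), g ∈ H →
      Integrable (fun p : Z × ℝ => g p.1) μ := by
    intro μ _ g hg
    refine integrable_of_bdd μ (((hH g hg).1.comp measurable_fst).aestronglyMeasurable) 1
      (fun p => ?_)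
    have := (hH g hg).2 p.1
    rw [abs_le]; exact ⟨by linarith [this.1], this.2⟩
  have iDiff : ∀ (μ : Measure Z) [IsProbabilityMeasure μ] (a b : Z → ℝ), a ∈ H → b ∈ H →
      Integrable (fun z => a z - b z) μ := by
    intro μ _ a b ha hb
    refine integrable_of_bdd μ (((hH a ha).1.sub (hH b hb).1).aestronglyMeasurable) 2
      (fun z => ?_)
    obtain ⟨c, d⟩ := (hH a ha).2 z
    obtain ⟨e, f⟩ := (hH b hb).2 z
    rw [abs_le]; constructor <;> linarith
  -- step 1 : noise bounds
  have step1 : |(∫ p : Z × ℝ, |h p.1 - p.2| ∂μbarS) - ∫ p : Z × ℝ, |h p.1 - fS p.1| ∂μbarS| ≤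
      ∫ p : Z × ℝ, |p.2 - fS p.1| ∂μbarS := by
    refine le_trans (abs_int_abs_sub μbarS ((ibar μbarS h hh).sub hyS)
      ((ibar μbarS h hh).sub (ibar μbarS fS hfS))) (le_of_eq ?_)
    congr 1; funext p
    rw [show (h p.1 - p.2) - (h p.1 - fS p.1) = -(p.2 - fS p.1) by ring, abs_neg]
  have step4 : |(∫ p : Z × ℝ, |h p.1 - p.2| ∂μbarT) - ∫ p : Z × ℝ, |h p.1 - fT p.1| ∂μbarT| ≤
      ∫ p : Z × ℝ, |p.2 - fT p.1| ∂μbarT := by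
    refine le_trans (abs_int_abs_sub μbarT ((ibar μbarT h hh).sub hyT)
      ((ibar μbarT h hh).sub (ibar μbarT fT hfT))) (le_of_eq ?_)
    congr 1; funext p
    rw [show (h p.1 - p.2) - (h p.1 - fT p.1) = -(p.2 - fT p.1) by ring, abs_neg]
  -- transfer to marginals
  have tS : (∫ p : Z × ℝ, |h p.1 - fS p.1| ∂μbarS) = ∫ z, |h z - fS z| ∂μS := by
    rw [← hmS, integral_map (f := fun z => |h z - fS z|) measurable_fst.aemeasurable
      ((hhm.sub hfSm).abs.aestronglyMeasurable)]
  have tT : (∫ p : Z × ℝ, |h p.1 - fT p.1| ∂μbarT) = ∫ z, |h z - fT z| ∂μT := by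
    rw [← hmT, integral_map (f := fun z => |h z - fT z|) measurable_fst.aemeasurable
      ((hhm.sub hfTm).abs.aestronglyMeasurable)]
  -- label-shift bounds
  have swapS : |(∫ z, |h z - fS z| ∂μS) - ∫ z, |h z - fT z| ∂μS| ≤
      ∫ z, |fS z - fT z| ∂μS := by
    refine le_trans (abs_int_abs_sub μS (iDiff μS h fS hh hfS) (iDiff μS h fT hh hfT))
      (le_of_eq ?_)
    congr 1; funext z
    rw [show (h z - fS z) - (h z - fT z) = -(fS z - fT z) by ring, abs_neg]
  have swapT : |(∫ z, |h z - fS z| ∂μT) - ∫ z, |h z - fT z| ∂μT| ≤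
      ∫ z, |fS z - fT z| ∂μT := by
    refine le_trans (abs_int_abs_sub μT (iDiff μT h fS hh hfS) (iDiff μT h fT hh hfT))
      (le_of_eq ?_)
    congr 1; funext z
    rw [show (h z - fS z) - (h z - fT z) = -(fS z - fT z) by ring, abs_neg]
  -- distribution-shift bounds
  have dS : |(∫ z, |h z - fS z| ∂μS) - ∫ z, |h z - fS z| ∂μT| ≤ dHt H μS μT :=
    key_dHt μS μT H hH hh hfS
  have dT : |(∫ z, |h z - fT z| ∂μS) - ∫ z, |h z - fT z| ∂μT| ≤ dHt H μS μT :=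
    key_dHt μS μT H hH hh hfT
  rw [← tS] at swapS dS
  rw [← tT] at swapT dT
  set eS := ∫ p : Z × ℝ, |h p.1 - p.2| ∂μbarS
  set eT := ∫ p : Z × ℝ, |h p.1 - p.2| ∂μbarT
  set AS := ∫ p : Z × ℝ, |h p.1 - fS p.1| ∂μbarS
  set BT := ∫ p : Z × ℝ, |h p.1 - fT p.1| ∂μbarT
  set AT := ∫ z, |h z - fS z| ∂μT
  set BS := ∫ z, |h z - fT z| ∂μS
  rcases le_total (∫ z, |fS z - fT z| ∂μS) (∫ z, |fS z - fT z| ∂μT) with hab | hab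
  · rw [min_eq_left hab]
    have h1 := abs_sub_le eS AS eT
    have h2 := abs_sub_le AS BS eT
    have h3 := abs_sub_le BS BT eT
    rw [abs_sub_comm eT BT] at step4
    linarith [step1, swapS, dT, step4, h1, h2, h3]
  · rw [min_eq_right hab]
    have h1 := abs_sub_le eS AS eT
    have h2 := abs_sub_le AS AT eT
    have h3 := abs_sub_le AT BT eT
    rw [abs_sub_comm eT BT] at step4
    linarith [step1, dS, swapT, step4, h1, h2, h3]
end

section
/- (Deterministic core of Lemma A.4.) Let h ∈ H, and suppose the source empirical deviation bound ε_S(h) ≤ ε̂_S(h) + C holds for a constant C ≥ 0, where ε̂_S(h) := ∫ |h(z) − y| dμ̂_S(z,y) is the risk under an empirical measure μ̂_S. Then ε_T(h) ≤ ε̂_S(h) + d_{HΔH}(μ_S, μ_T) + min( ∫ |f_S(z) − f_T(z)| dμ_S(z), ∫ |f_S(z) − f_T(z)| dμ_T(z) ) + (n_S + n_T) + C. -/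
open MeasureTheory Set

section aux
variable {α : Type*} [MeasurableSpace α]

lemma integrable_of_abs_le' (μ : Measure α) [IsFiniteMeasure μ] (f : α → ℝ) (C : ℝ)
    (hf : AEStronglyMeasurable f μ) (hb : ∀ᵐ a ∂μ, |f a| ≤ C) : Integrable f μ :=
  Integrable.mono' (integrable_const C) hf (by simpa [Real.norm_eq_abs] using hb)

lemma integral_abs01' (μ : Measure α) (g g' : α → ℝ) (hg : Measurable g) (hg' : Measurable g')
    (hbg : ∀ z, g z = 0 ∨ g z = 1) (hbg' : ∀ z, g' z = 0 ∨ g' z = 1) :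
    ∫ z, |g z - g' z| ∂μ = (μ {z | g z ≠ g' z}).toReal := by
  have hs : MeasurableSet {z | g z ≠ g' z} := (measurableSet_eq_fun hg hg').compl
  have hpt : ∀ z, |g z - g' z| = ({z | g z ≠ g' z}).indicator (fun _ => (1:ℝ)) z := by
    intro z
    rcases hbg z with h1|h1 <;> rcases hbg' z with h2|h2 <;>
      simp [Set.indicator, h1, h2]
  rw [show (fun z => |g z - g' z|) = ({z | g z ≠ g' z}).indicator (fun _ => (1:ℝ)) from
    funext hpt]
  rw [integral_indicator hs]
  simp
  rfl

lemma le_dHdH' (H : Set (α → ℝ)) (μ ν : Measure α)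
    [IsProbabilityMeasure μ] [IsProbabilityMeasure ν]
    (g g' : α → ℝ) (hg : g ∈ H) (hg' : g' ∈ H) :
    (ν {z | g z ≠ g' z}).toReal - (μ {z | g z ≠ g' z}).toReal ≤ dHdH H μ ν := by
  have hbdd : BddAbove {x | ∃ g ∈ H, ∃ g' ∈ H,
      x = |(μ {z | g z ≠ g' z}).toReal - (ν {z | g z ≠ g' z}).toReal|} := by
    refine ⟨1, ?_⟩
    rintro x ⟨a, -, b, -, rfl⟩
    have h1 : (μ {z | a z ≠ b z}).toReal ≤ 1 := by
      simpa using ENNReal.toReal_mono (by simp) (prob_le_one (μ := μ))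
    have h2 : (ν {z | a z ≠ b z}).toReal ≤ 1 := by
      simpa using ENNReal.toReal_mono (by simp) (prob_le_one (μ := ν))
    have h3 : (0:ℝ) ≤ (μ {z | a z ≠ b z}).toReal := ENNReal.toReal_nonneg
    have h4 : (0:ℝ) ≤ (ν {z | a z ≠ b z}).toReal := ENNReal.toReal_nonneg
    rw [abs_le]
    constructor <;> linarith
  have hmem : |(μ {z | g z ≠ g' z}).toReal - (ν {z | g z ≠ g' z}).toReal| ∈
      {x | ∃ g ∈ H, ∃ g' ∈ H,
        x = |(μ {z | g z ≠ g' z}).toReal - (ν {z | g z ≠ g' z}).toReal|} :=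
    ⟨g, hg, g', hg', rfl⟩
  calc (ν {z | g z ≠ g' z}).toReal - (μ {z | g z ≠ g' z}).toReal
      ≤ |(μ {z | g z ≠ g' z}).toReal - (ν {z | g z ≠ g' z}).toReal| := by
        rw [abs_sub_comm]; exact le_abs_self _
    _ ≤ dHdH H μ ν := le_csSup hbdd hmem

end aux

/-- Deterministic core of Lemma A.4 (classification): if
`ε_S(h) ≤ ε̂_S(h) + C` with `C ≥ 0`, then
`ε_T(h) ≤ ε̂_S(h) + d_{HΔH}(μ_S, μ_T) + min(...) + (n_S + n_T) + C`. -/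
theorem stmt_9 {Z : Type*} [MeasurableSpace Z]
    (μS μT : Measure Z) [IsProbabilityMeasure μS] [IsProbabilityMeasure μT]
    (μbarS μbarT μhatS : Measure (Z × ℝ))
    [IsProbabilityMeasure μbarS] [IsProbabilityMeasure μbarT]
    [IsProbabilityMeasure μhatS]
    (hmS : μbarS.map Prod.fst = μS) (hmT : μbarT.map Prod.fst = μT)
    (hyS : ∀ᵐ p ∂μbarS, p.2 = 0 ∨ p.2 = 1)
    (hyT : ∀ᵐ p ∂μbarT, p.2 = 0 ∨ p.2 = 1)
    (hyhatS : ∀ᵐ p ∂μhatS, p.2 = 0 ∨ p.2 = 1)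
    (H : Set (Z → ℝ)) (hHne : H.Nonempty)
    (hH : ∀ g ∈ H, Measurable g ∧ ∀ z, g z = 0 ∨ g z = 1)
    (fS fT : Z → ℝ) (hfS : fS ∈ H) (hfT : fT ∈ H)
    (h : Z → ℝ) (hh : h ∈ H)
    (C : ℝ) (hC : 0 ≤ C)
    (hdev : (∫ p : Z × ℝ, |h p.1 - p.2| ∂μbarS) ≤
      (∫ p : Z × ℝ, |h p.1 - p.2| ∂μhatS) + C) :
    (∫ p : Z × ℝ, |h p.1 - p.2| ∂μbarT) ≤
      (∫ p : Z × ℝ, |h p.1 - p.2| ∂μhatS) + dHdH H μS μT +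
      min (∫ z, |fS z - fT z| ∂μS) (∫ z, |fS z - fT z| ∂μT) +
      ((∫ p : Z × ℝ, |p.2 - fS p.1| ∂μbarS) +
        ∫ p : Z × ℝ, |p.2 - fT p.1| ∂μbarT) + C := by
  obtain ⟨hhm, hhb⟩ := hH h hh
  obtain ⟨hSm, hSb⟩ := hH fS hfS
  obtain ⟨hTm, hTb⟩ := hH fT hfT
  -- generic marginal identity
  have marg : ∀ (μbar : Measure (Z × ℝ)) (μ : Measure Z), μbar.map Prod.fst = μ →
      ∀ (F : Z → ℝ), Measurable F →
      (∫ p : Z × ℝ, F p.1 ∂μbar) = ∫ z, F z ∂μ := by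
    intro μbar μ hm F hF
    rw [← hm, integral_map measurable_fst.aemeasurable hF.aestronglyMeasurable]
  have meas_hfS : Measurable fun z => |h z - fS z| := (hhm.sub hSm).abs
  have meas_hfT : Measurable fun z => |h z - fT z| := (hhm.sub hTm).abs
  have meas_ST : Measurable fun z => |fS z - fT z| := (hSm.sub hTm).abs
  -- integrability of 0/1-gap functions on any finite measure
  have int01 : ∀ (μ : Measure Z) [IsFiniteMeasure μ] (g g' : Z → ℝ),
      Measurable g → Measurable g' → (∀ z, g z = 0 ∨ g z = 1) →
      (∀ z, g' z = 0 ∨ g' z = 1) → Integrable (fun z => |g z - g' z|) μ := by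
    intro μ _ g g' hg hg' hbg hbg'
    refine integrable_of_abs_le' μ _ 1 (hg.sub hg').abs.aestronglyMeasurable ?_
    filter_upwards with z
    rcases hbg z with h1|h1 <;> rcases hbg' z with h2|h2 <;> simp [h1, h2]
  -- integrability on the joint measures
  have intT_hy : Integrable (fun p : Z × ℝ => |h p.1 - p.2|) μbarT := by
    refine integrable_of_abs_le' _ _ 2
      ((hhm.comp measurable_fst).sub measurable_snd).abs.aestronglyMeasurable ?_
    filter_upwards [hyT] with p hp
    rcases hhb p.1 with h1|h1 <;> rcases hp with h2|h2 <;> simp [h1, h2] <;> norm_num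
  have intT_yfT : Integrable (fun p : Z × ℝ => |p.2 - fT p.1|) μbarT := by
    refine integrable_of_abs_le' _ _ 2
      (measurable_snd.sub (hTm.comp measurable_fst)).abs.aestronglyMeasurable ?_
    filter_upwards [hyT] with p hp
    rcases hTb p.1 with h1|h1 <;> rcases hp with h2|h2 <;> simp [h1, h2] <;> norm_num
  have intT_hfT : Integrable (fun p : Z × ℝ => |h p.1 - fT p.1|) μbarT := by
    refine integrable_of_abs_le' _ _ 1
      ((hhm.comp measurable_fst).sub (hTm.comp measurable_fst)).abs.aestronglyMeasurable ?_
    filter_upwards with p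
    rcases hhb p.1 with h1|h1 <;> rcases hTb p.1 with h2|h2 <;> simp [h1, h2]
  have intS_hy : Integrable (fun p : Z × ℝ => |h p.1 - p.2|) μbarS := by
    refine integrable_of_abs_le' _ _ 2
      ((hhm.comp measurable_fst).sub measurable_snd).abs.aestronglyMeasurable ?_
    filter_upwards [hyS] with p hp
    rcases hhb p.1 with h1|h1 <;> rcases hp with h2|h2 <;> simp [h1, h2] <;> norm_num
  have intS_yfS : Integrable (fun p : Z × ℝ => |p.2 - fS p.1|) μbarS := by
    refine integrable_of_abs_le' _ _ 2
      (measurable_snd.sub (hSm.comp measurable_fst)).abs.aestronglyMeasurable ?_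
    filter_upwards [hyS] with p hp
    rcases hSb p.1 with h1|h1 <;> rcases hp with h2|h2 <;> simp [h1, h2] <;> norm_num
  -- Step 1: ε_T(h) ≤ ∫_{μT} |h - fT| + n_T
  have step1 : (∫ p : Z × ℝ, |h p.1 - p.2| ∂μbarT) ≤
      (∫ z, |h z - fT z| ∂μT) + ∫ p : Z × ℝ, |p.2 - fT p.1| ∂μbarT := by
    have := marg μbarT μT hmT (fun z => |h z - fT z|) meas_hfT
    rw [← this, ← integral_add intT_hfT intT_yfT]
    refine integral_mono intT_hy (intT_hfT.add intT_yfT) ?_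
    intro p
    have := abs_sub_le (h p.1) (fT p.1) p.2
    have h2 : |fT p.1 - p.2| = |p.2 - fT p.1| := abs_sub_comm _ _
    simp only []
    linarith
  -- Step S: ∫_{μS} |h - fS| ≤ ε_S(h) + n_S ≤ ε̂_S(h) + C + n_S
  have stepS : (∫ z, |h z - fS z| ∂μS) ≤
      (∫ p : Z × ℝ, |h p.1 - p.2| ∂μhatS) + C +
        ∫ p : Z × ℝ, |p.2 - fS p.1| ∂μbarS := by
    have hm := marg μbarS μS hmS (fun z => |h z - fS z|) meas_hfS
    have intS_hfS : Integrable (fun p : Z × ℝ => |h p.1 - fS p.1|) μbarS := by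
      refine integrable_of_abs_le' _ _ 1
        ((hhm.comp measurable_fst).sub (hSm.comp measurable_fst)).abs.aestronglyMeasurable ?_
      filter_upwards with p
      rcases hhb p.1 with h1|h1 <;> rcases hSb p.1 with h2|h2 <;> simp [h1, h2]
    have tri : (∫ p : Z × ℝ, |h p.1 - fS p.1| ∂μbarS) ≤
        (∫ p : Z × ℝ, |h p.1 - p.2| ∂μbarS) + ∫ p : Z × ℝ, |p.2 - fS p.1| ∂μbarS := by
      rw [← integral_add intS_hy intS_yfS]
      refine integral_mono intS_hfS (intS_hy.add intS_yfS) ?_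
      intro p
      have := abs_sub_le (h p.1) p.2 (fS p.1)
      simp only []
      linarith
    rw [← hm]
    linarith
  -- dHdH transfers for (h, fS) and (h, fT)
  have dSfS : (∫ z, |h z - fS z| ∂μT) ≤ (∫ z, |h z - fS z| ∂μS) + dHdH H μS μT := by
    rw [integral_abs01' μT h fS hhm hSm hhb hSb, integral_abs01' μS h fS hhm hSm hhb hSb]
    have := le_dHdH' H μS μT h fS hh hfS
    linarith
  have dSfT : (∫ z, |h z - fT z| ∂μT) ≤ (∫ z, |h z - fT z| ∂μS) + dHdH H μS μT := by
    rw [integral_abs01' μT h fT hhm hTm hhb hTb, integral_abs01' μS h fT hhm hTm hhb hTb]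
    have := le_dHdH' H μS μT h fT hh hfT
    linarith
  -- triangle inequalities over μT and μS
  have triT : (∫ z, |h z - fT z| ∂μT) ≤
      (∫ z, |h z - fS z| ∂μT) + ∫ z, |fS z - fT z| ∂μT := by
    rw [← integral_add (int01 μT h fS hhm hSm hhb hSb) (int01 μT fS fT hSm hTm hSb hTb)]
    refine integral_mono (int01 μT h fT hhm hTm hhb hTb)
      ((int01 μT h fS hhm hSm hhb hSb).add (int01 μT fS fT hSm hTm hSb hTb)) ?_
    intro z
    have := abs_sub_le (h z) (fS z) (fT z)
    simp only []
    linarith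
  have triS : (∫ z, |h z - fT z| ∂μS) ≤
      (∫ z, |h z - fS z| ∂μS) + ∫ z, |fS z - fT z| ∂μS := by
    rw [← integral_add (int01 μS h fS hhm hSm hhb hSb) (int01 μS fS fT hSm hTm hSb hTb)]
    refine integral_mono (int01 μS h fT hhm hTm hhb hTb)
      ((int01 μS h fS hhm hSm hhb hSb).add (int01 μS fS fT hSm hTm hSb hTb)) ?_
    intro z
    have := abs_sub_le (h z) (fS z) (fT z)
    simp only []
    linarith
  -- combine
  rcases min_cases (∫ z, |fS z - fT z| ∂μS) (∫ z, |fS z - fT z| ∂μT) with ⟨hmin, _⟩ | ⟨hmin, _⟩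
  · -- min = μS integral : use path B
    rw [hmin]
    linarith
  · -- min = μT integral : use path A
    rw [hmin]
    linarith
end

section
/- (Deterministic core of Lemma A.8, regression.) Let h ∈ H, and suppose the source empirical deviation bound ε_S(h) ≤ ε̂_S(h) + C holds for a constant C ≥ 0, where ε̂_S(h) := ∫ |h(z) − y| dμ̂_S(z,y) is the risk under an empirical measure μ̂_S. Then ε_T(h) ≤ ε̂_S(h) + d_H̃(μ_S, μ_T) + min( ∫ |f_S(z) − f_T(z)| dμ_S(z), ∫ |f_S(z) − f_T(z)| dμ_T(z) ) + (n_S + n_T) + C. -/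
open MeasureTheory Set

section aux
variable {Z : Type*} [MeasurableSpace Z]

lemma intble_bdd {α : Type*} [MeasurableSpace α] (μ : Measure α) [IsFiniteMeasure μ]
    {F : α → ℝ} (hm : Measurable F) (hb : ∀ z, |F z| ≤ 1) : Integrable F μ :=
  (integrable_const (1:ℝ)).mono' hm.aestronglyMeasurable
    (Filter.Eventually.of_forall fun z => by simpa using hb z)

lemma prob_toReal_le_one {α : Type*} [MeasurableSpace α] (κ : Measure α)
    [IsProbabilityMeasure κ] (S : Set α) : (κ S).toReal ≤ 1 := by
  have h := ENNReal.toReal_mono (by simp : (1:ENNReal) ≠ ⊤) (prob_le_one (μ := κ) (s := S))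
  simpa using h

lemma dHt_mem_le (H : Set (Z → ℝ)) (μ ν : Measure Z)
    [IsProbabilityMeasure μ] [IsProbabilityMeasure ν]
    {g g' : Z → ℝ} (hg : g ∈ H) (hg' : g' ∈ H) {t : ℝ} (ht : t ∈ Icc (0:ℝ) 1) :
    |(μ {z | t < |g z - g' z|}).toReal - (ν {z | t < |g z - g' z|}).toReal| ≤ dHt H μ ν := by
  apply le_csSup
  · refine ⟨1, ?_⟩
    rintro x ⟨a, -, b, -, s, -, rfl⟩
    have h1 := prob_toReal_le_one μ {z | s < |a z - b z|}
    have h2 := prob_toReal_le_one ν {z | s < |a z - b z|}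
    have h3 : (0:ℝ) ≤ (μ {z | s < |a z - b z|}).toReal := ENNReal.toReal_nonneg
    have h4 : (0:ℝ) ≤ (ν {z | s < |a z - b z|}).toReal := ENNReal.toReal_nonneg
    rw [abs_sub_le_iff]
    constructor <;> linarith
  · exact ⟨g, hg, g', hg', t, ht, rfl⟩

lemma dHt_nonneg (H : Set (Z → ℝ)) (μ ν : Measure Z)
    [IsProbabilityMeasure μ] [IsProbabilityMeasure ν]
    {g : Z → ℝ} (hg : g ∈ H) : 0 ≤ dHt H μ ν :=
  le_trans (abs_nonneg _) (dHt_mem_le H μ ν hg hg ⟨le_refl 0, zero_le_one⟩)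

lemma key_shift (μ ν : Measure Z) [IsProbabilityMeasure μ] [IsProbabilityMeasure ν]
    (H : Set (Z → ℝ)) {g g' : Z → ℝ} (hg : g ∈ H) (hg' : g' ∈ H)
    (hmg : Measurable g) (hmg' : Measurable g') (hb : ∀ z, |g z - g' z| ≤ 1) :
    ∫ z, |g z - g' z| ∂ν ≤ (∫ z, |g z - g' z| ∂μ) + dHt H μ ν := by
  set F : Z → ℝ := fun z => |g z - g' z| with hFdef
  have hFm : Measurable F := (hmg.sub hmg').abs
  have hF0 : ∀ z, 0 ≤ F z := fun z => abs_nonneg _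
  set d := dHt H μ ν with hd
  have hd0 : 0 ≤ d := dHt_nonneg H μ ν hg
  have repr : ∀ (κ : Measure Z), IsProbabilityMeasure κ →
      (∫ z, F z ∂κ) = (∫⁻ t in Ioi (0:ℝ), κ {z | t < F z}).toReal := by
    intro κ _
    rw [integral_eq_lintegral_of_nonneg_ae (Filter.Eventually.of_forall hF0)
        hFm.aestronglyMeasurable,
      lintegral_eq_lintegral_meas_lt κ (Filter.Eventually.of_forall hF0) hFm.aemeasurable]
  have fin : ∀ (κ : Measure Z), IsProbabilityMeasure κ →
      (∫⁻ t in Ioi (0:ℝ), κ {z | t < F z}) ≠ ⊤ := by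
    intro κ _
    rw [← lintegral_eq_lintegral_meas_lt κ (Filter.Eventually.of_forall hF0) hFm.aemeasurable]
    have hle : (∫⁻ z, ENNReal.ofReal (F z) ∂κ) ≤ ∫⁻ _, 1 ∂κ :=
      lintegral_mono fun z => ENNReal.ofReal_le_one.mpr (hb z)
    have : (∫⁻ z, ENNReal.ofReal (F z) ∂κ) ≤ 1 := by simpa using hle
    exact (lt_of_le_of_lt this (by simp)).ne
  have hμmeas : Measurable fun t : ℝ => μ {z | t < F z} := by
    apply Antitone.measurable
    intro s t hst
    exact measure_mono fun z hz => lt_of_le_of_lt hst hz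
  have main : (∫⁻ t in Ioi (0:ℝ), ν {z | t < F z}) ≤
      (∫⁻ t in Ioi (0:ℝ), μ {z | t < F z}) + ENNReal.ofReal d := by
    have hsplit : (Ioi (0:ℝ)) = Ioc 0 1 ∪ Ioi 1 := (Ioc_union_Ioi_eq_Ioi zero_le_one).symm
    have hzero : (∫⁻ t in Ioi (1:ℝ), ν {z | t < F z}) = 0 := by
      have hz0 : ∀ t ∈ Ioi (1:ℝ), ν {z | t < F z} = (fun _ : ℝ => (0:ENNReal)) t := by
        intro t ht
        have hempty : {z | t < F z} = (∅ : Set Z) :=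
          eq_empty_of_forall_notMem fun z hz =>
            absurd (lt_trans ht hz) (not_lt.mpr (hb z))
        rw [hempty]; simp
      rw [setLIntegral_congr_fun measurableSet_Ioi hz0]
      simp
    have hν : (∫⁻ t in Ioi (0:ℝ), ν {z | t < F z}) =
        ∫⁻ t in Ioc (0:ℝ) 1, ν {z | t < F z} := by
      rw [hsplit, lintegral_union measurableSet_Ioi Ioc_disjoint_Ioi_same, hzero, add_zero]
    have hpt : ∀ t ∈ Ioc (0:ℝ) 1, ν {z | t < F z} ≤ μ {z | t < F z} + ENNReal.ofReal d := by
      intro t ht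
      have hmem := dHt_mem_le H μ ν hg hg' (t := t) ⟨ht.1.le, ht.2⟩
      have h1 : (ν {z | t < F z}).toReal ≤ (μ {z | t < F z}).toReal + d := by
        have h2 := abs_le.mp hmem
        have := h2.1
        simp only [hFdef, hd] at *
        linarith
      calc ν {z | t < F z} = ENNReal.ofReal ((ν {z | t < F z}).toReal) :=
            (ENNReal.ofReal_toReal (measure_ne_top _ _)).symm
        _ ≤ ENNReal.ofReal ((μ {z | t < F z}).toReal + d) := ENNReal.ofReal_le_ofReal h1
        _ ≤ ENNReal.ofReal ((μ {z | t < F z}).toReal) + ENNReal.ofReal d :=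
            ENNReal.ofReal_add_le
        _ = μ {z | t < F z} + ENNReal.ofReal d := by
            rw [ENNReal.ofReal_toReal (measure_ne_top _ _)]
    calc (∫⁻ t in Ioi (0:ℝ), ν {z | t < F z})
        = ∫⁻ t in Ioc (0:ℝ) 1, ν {z | t < F z} := hν
      _ ≤ ∫⁻ t in Ioc (0:ℝ) 1, (μ {z | t < F z} + ENNReal.ofReal d) :=
          setLIntegral_mono (hμmeas.add measurable_const) hpt
      _ = (∫⁻ t in Ioc (0:ℝ) 1, μ {z | t < F z}) + ENNReal.ofReal d * volume (Ioc (0:ℝ) 1) := by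
          rw [lintegral_add_right _ measurable_const, setLIntegral_const]
      _ = (∫⁻ t in Ioc (0:ℝ) 1, μ {z | t < F z}) + ENNReal.ofReal d := by
          rw [Real.volume_Ioc]
          norm_num
      _ ≤ (∫⁻ t in Ioi (0:ℝ), μ {z | t < F z}) + ENNReal.ofReal d := by
          gcongr
          exact Ioc_subset_Ioi_self
  have hfinμ := fin μ inferInstance
  have hfinν := fin ν inferInstance
  rw [show (∫ z, |g z - g' z| ∂ν) = ∫ z, F z ∂ν from rfl,
    show (∫ z, |g z - g' z| ∂μ) = ∫ z, F z ∂μ from rfl,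
    repr μ inferInstance, repr ν inferInstance]
  calc (∫⁻ t in Ioi (0:ℝ), ν {z | t < F z}).toReal
      ≤ ((∫⁻ t in Ioi (0:ℝ), μ {z | t < F z}) + ENNReal.ofReal d).toReal :=
        ENNReal.toReal_mono (ENNReal.add_ne_top.mpr ⟨hfinμ, ENNReal.ofReal_ne_top⟩) main
    _ = (∫⁻ t in Ioi (0:ℝ), μ {z | t < F z}).toReal + d := by
        rw [ENNReal.toReal_add hfinμ ENNReal.ofReal_ne_top, ENNReal.toReal_ofReal hd0]

end aux

/-- Deterministic core of Lemma A.8 (regression): if `ε_S(h) ≤ ε̂_S(h) + C`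
with `C ≥ 0`, then
`ε_T(h) ≤ ε̂_S(h) + d_H̃(μ_S, μ_T) + min(...) + (n_S + n_T) + C`. -/
theorem stmt_10 {Z : Type*} [MeasurableSpace Z]
    (μS μT : Measure Z) [IsProbabilityMeasure μS] [IsProbabilityMeasure μT]
    (μbarS μbarT μhatS : Measure (Z × ℝ))
    [IsProbabilityMeasure μbarS] [IsProbabilityMeasure μbarT]
    [IsProbabilityMeasure μhatS]
    (hmS : μbarS.map Prod.fst = μS) (hmT : μbarT.map Prod.fst = μT)
    (hyS : Integrable (fun p : Z × ℝ => p.2) μbarS)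
    (hyT : Integrable (fun p : Z × ℝ => p.2) μbarT)
    (hyhatS : Integrable (fun p : Z × ℝ => p.2) μhatS)
    (H : Set (Z → ℝ)) (hHne : H.Nonempty)
    (hH : ∀ g ∈ H, Measurable g ∧ ∀ z, g z ∈ Icc (0 : ℝ) 1)
    (fS fT : Z → ℝ) (hfS : fS ∈ H) (hfT : fT ∈ H)
    (h : Z → ℝ) (hh : h ∈ H)
    (C : ℝ) (hC : 0 ≤ C)
    (hdev : (∫ p : Z × ℝ, |h p.1 - p.2| ∂μbarS) ≤
      (∫ p : Z × ℝ, |h p.1 - p.2| ∂μhatS) + C) :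
    (∫ p : Z × ℝ, |h p.1 - p.2| ∂μbarT) ≤
      (∫ p : Z × ℝ, |h p.1 - p.2| ∂μhatS) + dHt H μS μT +
      min (∫ z, |fS z - fT z| ∂μS) (∫ z, |fS z - fT z| ∂μT) +
      ((∫ p : Z × ℝ, |p.2 - fS p.1| ∂μbarS) +
        ∫ p : Z × ℝ, |p.2 - fT p.1| ∂μbarT) + C := by
  obtain ⟨hhm, hhb⟩ := hH h hh
  obtain ⟨hSm, hSb⟩ := hH fS hfS
  obtain ⟨hTm, hTb⟩ := hH fT hfT
  -- pairwise difference bounds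
  have hdiff : ∀ (a b : Z → ℝ), (∀ z, a z ∈ Icc (0:ℝ) 1) → (∀ z, b z ∈ Icc (0:ℝ) 1) →
      ∀ z, |a z - b z| ≤ 1 := by
    intro a b ha hb z
    have h1 := ha z; have h2 := hb z
    rw [abs_sub_le_iff]
    constructor <;> [linarith [h1.1, h1.2, h2.1, h2.2]; linarith [h1.1, h1.2, h2.1, h2.2]]
  -- integrability facts
  have int_fst : ∀ (κ : Measure (Z × ℝ)), IsProbabilityMeasure κ → ∀ (a b : Z → ℝ),
      Measurable a → Measurable b → (∀ z, |a z - b z| ≤ 1) →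
      Integrable (fun p : Z × ℝ => |a p.1 - b p.1|) κ := by
    intro κ _ a b ha hb hab
    exact intble_bdd κ (((ha.comp measurable_fst).sub (hb.comp measurable_fst)).abs)
      (fun p => by simpa [abs_abs] using hab p.1)
  have int_hy : ∀ (κ : Measure (Z × ℝ)), IsProbabilityMeasure κ →
      Integrable (fun p : Z × ℝ => p.2) κ → ∀ (a : Z → ℝ), Measurable a →
      (∀ z, a z ∈ Icc (0:ℝ) 1) →
      Integrable (fun p : Z × ℝ => |a p.1 - p.2|) κ := by
    intro κ _ hy a ha hab
    have h1 : Integrable (fun p : Z × ℝ => a p.1) κ :=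
      intble_bdd κ (ha.comp measurable_fst)
        (fun p => abs_le.mpr ⟨by linarith [(hab p.1).1], (hab p.1).2⟩)
    exact (h1.sub hy).abs
  have int_yh : ∀ (κ : Measure (Z × ℝ)), IsProbabilityMeasure κ →
      Integrable (fun p : Z × ℝ => p.2) κ → ∀ (a : Z → ℝ), Measurable a →
      (∀ z, a z ∈ Icc (0:ℝ) 1) →
      Integrable (fun p : Z × ℝ => |p.2 - a p.1|) κ := by
    intro κ _ hy a ha hab
    have h1 : Integrable (fun p : Z × ℝ => a p.1) κ :=
      intble_bdd κ (ha.comp measurable_fst)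
        (fun p => abs_le.mpr ⟨by linarith [(hab p.1).1], (hab p.1).2⟩)
    exact (hy.sub h1).abs
  -- marginal identity
  have marg : ∀ (κ : Measure (Z × ℝ)) (κ' : Measure Z), κ.map Prod.fst = κ' →
      ∀ (a b : Z → ℝ), Measurable a → Measurable b →
      (∫ z, |a z - b z| ∂κ') = ∫ p : Z × ℝ, |a p.1 - b p.1| ∂κ := by
    intro κ κ' hκ a b ha hb
    rw [← hκ, integral_map measurable_fst.aemeasurable (f := fun z => |a z - b z|)
      ((ha.sub hb).abs.aestronglyMeasurable)]
  -- Step 1: ε_T(h) ≤ ∫|h - fT| dμT + n_T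
  have step1 : (∫ p : Z × ℝ, |h p.1 - p.2| ∂μbarT) ≤
      (∫ z, |h z - fT z| ∂μT) + ∫ p : Z × ℝ, |p.2 - fT p.1| ∂μbarT := by
    rw [marg μbarT μT hmT h fT hhm hTm]
    rw [← integral_add (int_fst μbarT inferInstance h fT hhm hTm (hdiff h fT hhb hTb))
      (int_yh μbarT inferInstance hyT fT hTm hTb)]
    apply integral_mono (int_hy μbarT inferInstance hyT h hhm hhb)
      ((int_fst μbarT inferInstance h fT hhm hTm (hdiff h fT hhb hTb)).add
        (int_yh μbarT inferInstance hyT fT hTm hTb))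
    intro p
    calc |h p.1 - p.2| = |(h p.1 - fT p.1) + (fT p.1 - p.2)| := by ring_nf
      _ ≤ |h p.1 - fT p.1| + |fT p.1 - p.2| := abs_add_le _ _
      _ = |h p.1 - fT p.1| + |p.2 - fT p.1| := by rw [abs_sub_comm (fT p.1) p.2]
  -- source side bound
  have srcS : (∫ z, |h z - fS z| ∂μS) ≤
      (∫ p : Z × ℝ, |h p.1 - p.2| ∂μhatS) + C + ∫ p : Z × ℝ, |p.2 - fS p.1| ∂μbarS := by
    have tri : (∫ z, |h z - fS z| ∂μS) ≤
        (∫ p : Z × ℝ, |h p.1 - p.2| ∂μbarS) + ∫ p : Z × ℝ, |p.2 - fS p.1| ∂μbarS := by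
      rw [marg μbarS μS hmS h fS hhm hSm]
      rw [← integral_add (int_hy μbarS inferInstance hyS h hhm hhb)
        (int_yh μbarS inferInstance hyS fS hSm hSb)]
      apply integral_mono (int_fst μbarS inferInstance h fS hhm hSm (hdiff h fS hhb hSb))
        ((int_hy μbarS inferInstance hyS h hhm hhb).add
          (int_yh μbarS inferInstance hyS fS hSm hSb))
      intro p
      calc |h p.1 - fS p.1| = |(h p.1 - p.2) + (p.2 - fS p.1)| := by ring_nf
        _ ≤ |h p.1 - p.2| + |p.2 - fS p.1| := abs_add_le _ _
    linarith
  -- two routes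
  have mono_int : ∀ (κ : Measure Z), IsProbabilityMeasure κ → ∀ hκ : μbarS.map Prod.fst = μS,
      True := fun _ _ _ => trivial
  have routeA : (∫ z, |h z - fT z| ∂μT) ≤
      (∫ z, |h z - fS z| ∂μS) + dHt H μS μT + ∫ z, |fS z - fT z| ∂μT := by
    have t1 : (∫ z, |h z - fT z| ∂μT) ≤
        (∫ z, |h z - fS z| ∂μT) + ∫ z, |fS z - fT z| ∂μT := by
      rw [← integral_add (intble_bdd μT (F := fun z => |h z - fS z|) ((hhm.sub hSm).abs)
          (fun z => by simpa [abs_abs] using hdiff h fS hhb hSb z))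
        (intble_bdd μT (F := fun z => |fS z - fT z|) ((hSm.sub hTm).abs)
          (fun z => by simpa [abs_abs] using hdiff fS fT hSb hTb z))]
      apply integral_mono (intble_bdd μT ((hhm.sub hTm).abs)
          (fun z => by simpa [abs_abs] using hdiff h fT hhb hTb z))
        ((intble_bdd μT ((hhm.sub hSm).abs)
          (fun z => by simpa [abs_abs] using hdiff h fS hhb hSb z)).add
          (intble_bdd μT ((hSm.sub hTm).abs)
            (fun z => by simpa [abs_abs] using hdiff fS fT hSb hTb z)))
      intro z
      calc |h z - fT z| = |(h z - fS z) + (fS z - fT z)| := by ring_nf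
        _ ≤ |h z - fS z| + |fS z - fT z| := abs_add_le _ _
    have t2 : (∫ z, |h z - fS z| ∂μT) ≤ (∫ z, |h z - fS z| ∂μS) + dHt H μS μT :=
      key_shift μS μT H hh hfS hhm hSm (hdiff h fS hhb hSb)
    linarith
  have routeB : (∫ z, |h z - fT z| ∂μT) ≤
      (∫ z, |h z - fS z| ∂μS) + dHt H μS μT + ∫ z, |fS z - fT z| ∂μS := by
    have t2 : (∫ z, |h z - fT z| ∂μT) ≤ (∫ z, |h z - fT z| ∂μS) + dHt H μS μT :=
      key_shift μS μT H hh hfT hhm hTm (hdiff h fT hhb hTb)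
    have t1 : (∫ z, |h z - fT z| ∂μS) ≤
        (∫ z, |h z - fS z| ∂μS) + ∫ z, |fS z - fT z| ∂μS := by
      rw [← integral_add (intble_bdd μS (F := fun z => |h z - fS z|) ((hhm.sub hSm).abs)
          (fun z => by simpa [abs_abs] using hdiff h fS hhb hSb z))
        (intble_bdd μS (F := fun z => |fS z - fT z|) ((hSm.sub hTm).abs)
          (fun z => by simpa [abs_abs] using hdiff fS fT hSb hTb z))]
      apply integral_mono (intble_bdd μS ((hhm.sub hTm).abs)
          (fun z => by simpa [abs_abs] using hdiff h fT hhb hTb z))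
        ((intble_bdd μS ((hhm.sub hSm).abs)
          (fun z => by simpa [abs_abs] using hdiff h fS hhb hSb z)).add
          (intble_bdd μS ((hSm.sub hTm).abs)
            (fun z => by simpa [abs_abs] using hdiff fS fT hSb hTb z)))
      intro z
      calc |h z - fT z| = |(h z - fS z) + (fS z - fT z)| := by ring_nf
        _ ≤ |h z - fS z| + |fS z - fT z| := abs_add_le _ _
    linarith
  rcases le_total (∫ z, |fS z - fT z| ∂μS) (∫ z, |fS z - fT z| ∂μT) with hmin | hmin
  · rw [min_eq_left hmin]
    linarith
  · rw [min_eq_right hmin]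
    linarith
end

section
/- (One-sided intermediate bound in the proof of Lemma A.2.) Let h ∈ H. Then |ε_{μ_S}(h, f_S) − ε_{μ_T}(h, f_T)| ≤ ∫ |f_S(z) − f_T(z)| dμ_S(z) + d_{HΔH}(μ_S, μ_T), and likewise |ε_{μ_S}(h, f_S) − ε_{μ_T}(h, f_T)| ≤ ∫ |f_S(z) − f_T(z)| dμ_T(z) + d_{HΔH}(μ_S, μ_T). -/
open MeasureTheory Set

lemma int_eq_meas {Z : Type*} [MeasurableSpace Z] (μ : Measure Z)
    (g g' : Z → ℝ) (hg : Measurable g) (hg' : Measurable g')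
    (h01 : ∀ z, g z = 0 ∨ g z = 1) (h01' : ∀ z, g' z = 0 ∨ g' z = 1) :
    ∫ z, |g z - g' z| ∂μ = (μ {z | g z ≠ g' z}).toReal := by
  have hset : MeasurableSet {z | g z ≠ g' z} :=
    (measurableSet_eq_fun hg hg').compl
  have hfun : ∀ z, |g z - g' z| = Set.indicator {z | g z ≠ g' z} 1 z := by
    intro z
    by_cases hz : g z = g' z
    · simp [hz, Set.indicator_of_notMem, hz]
    · have hz' : z ∈ {z | g z ≠ g' z} := hz
      rw [Set.indicator_of_mem hz']
      rcases h01 z with h1 | h1 <;> rcases h01' z with h2 | h2 <;>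
        simp [h1, h2] at hz ⊢ <;> norm_num [h1, h2]
  calc ∫ z, |g z - g' z| ∂μ = ∫ z, Set.indicator {z | g z ≠ g' z} 1 z ∂μ := by
        exact integral_congr_ae (Filter.Eventually.of_forall hfun)
    _ = (μ {z | g z ≠ g' z}).toReal := integral_indicator_one hset

lemma meas_tri {Z : Type*} [MeasurableSpace Z] (μ : Measure Z)
    [IsProbabilityMeasure μ] (a b c : Z → ℝ) :
    |(μ {z | a z ≠ b z}).toReal - (μ {z | a z ≠ c z}).toReal| ≤
      (μ {z | b z ≠ c z}).toReal := by
  have hfin : ∀ s : Set Z, μ s ≠ ⊤ := fun s => measure_ne_top μ s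
  have key : ∀ (p q r : Z → ℝ), μ {z | p z ≠ q z} ≤
      μ {z | p z ≠ r z} + μ {z | q z ≠ r z} := by
    intro p q r
    refine le_trans (measure_mono ?_) (measure_union_le _ _)
    intro z hz
    by_cases h1 : p z = r z
    · right; intro h2; exact hz (h1.trans h2.symm)
    · left; exact h1
  rw [abs_sub_le_iff]
  constructor
  · have := key a b c
    have h2 : μ {z | b z ≠ c z} = μ {z | c z ≠ b z} := by
      congr 1; ext z; exact ⟨fun h => Ne.symm h, fun h => Ne.symm h⟩
    have := (ENNReal.toReal_le_toReal (hfin _) (by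
      exact ENNReal.add_ne_top.2 ⟨hfin _, hfin _⟩)).2 this
    rw [ENNReal.toReal_add (hfin _) (hfin _)] at this
    linarith
  · have := key a c b
    have h2 : μ {z | c z ≠ b z} = μ {z | b z ≠ c z} := by
      congr 1; ext z; exact ⟨fun h => Ne.symm h, fun h => Ne.symm h⟩
    rw [h2] at this
    have := (ENNReal.toReal_le_toReal (hfin _) (by
      exact ENNReal.add_ne_top.2 ⟨hfin _, hfin _⟩)).2 this
    rw [ENNReal.toReal_add (hfin _) (hfin _)] at this
    linarith

/-- One-sided intermediate bounds in the proof of Lemma A.2: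
`|ε_{μ_S}(h, f_S) − ε_{μ_T}(h, f_T)|` is bounded by
`∫ |f_S − f_T| dμ_S + d_{HΔH}(μ_S, μ_T)` and likewise with `μ_T`. -/
theorem stmt_16 {Z : Type*} [MeasurableSpace Z]
    (μS μT : Measure Z) [IsProbabilityMeasure μS] [IsProbabilityMeasure μT]
    (H : Set (Z → ℝ)) (hHne : H.Nonempty)
    (hH : ∀ g ∈ H, Measurable g ∧ ∀ z, g z = 0 ∨ g z = 1)
    (fS fT : Z → ℝ) (hfS : fS ∈ H) (hfT : fT ∈ H)
    (h : Z → ℝ) (hh : h ∈ H) :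
    |(∫ z, |h z - fS z| ∂μS) - ∫ z, |h z - fT z| ∂μT| ≤
        (∫ z, |fS z - fT z| ∂μS) + dHdH H μS μT ∧
    |(∫ z, |h z - fS z| ∂μS) - ∫ z, |h z - fT z| ∂μT| ≤
        (∫ z, |fS z - fT z| ∂μT) + dHdH H μS μT := by
  obtain ⟨hhm, hh01⟩ := hH h hh
  obtain ⟨hSm, hS01⟩ := hH fS hfS
  obtain ⟨hTm, hT01⟩ := hH fT hfT
  rw [int_eq_meas μS h fS hhm hSm hh01 hS01,
      int_eq_meas μT h fT hhm hTm hh01 hT01,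
      int_eq_meas μS fS fT hSm hTm hS01 hT01,
      int_eq_meas μT fS fT hSm hTm hS01 hT01]
  -- dHdH bounds
  have hbdd : BddAbove {x | ∃ g ∈ H, ∃ g' ∈ H,
      x = |(μS {z | g z ≠ g' z}).toReal - (μT {z | g z ≠ g' z}).toReal|} := by
    refine ⟨1, fun x hx => ?_⟩
    obtain ⟨g, -, g', -, rfl⟩ := hx
    have h1 : (μS {z | g z ≠ g' z}).toReal ≤ 1 := by
      have := prob_le_one (μ := μS) (s := {z | g z ≠ g' z})
      simpa using ENNReal.toReal_le_of_le_ofReal zero_le_one (by simpa using this)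
    have h2 : (μT {z | g z ≠ g' z}).toReal ≤ 1 := by
      have := prob_le_one (μ := μT) (s := {z | g z ≠ g' z})
      simpa using ENNReal.toReal_le_of_le_ofReal zero_le_one (by simpa using this)
    have h3 : (0:ℝ) ≤ (μS {z | g z ≠ g' z}).toReal := ENNReal.toReal_nonneg
    have h4 : (0:ℝ) ≤ (μT {z | g z ≠ g' z}).toReal := ENNReal.toReal_nonneg
    rw [abs_sub_le_iff]; constructor <;> linarith
  have hd : ∀ g ∈ H, ∀ g' ∈ H,
      |(μS {z | g z ≠ g' z}).toReal - (μT {z | g z ≠ g' z}).toReal| ≤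
        dHdH H μS μT := by
    intro g hg g' hg'
    exact le_csSup hbdd ⟨g, hg, g', hg', rfl⟩
  set a1 := (μS {z | h z ≠ fS z}).toReal
  set a2 := (μS {z | h z ≠ fT z}).toReal
  set b1 := (μT {z | h z ≠ fS z}).toReal
  set b2 := (μT {z | h z ≠ fT z}).toReal
  have t1 : |a1 - a2| ≤ (μS {z | fS z ≠ fT z}).toReal := meas_tri μS h fS fT
  have t2 : |b1 - b2| ≤ (μT {z | fS z ≠ fT z}).toReal := meas_tri μT h fS fT
  have d1 : |a2 - b2| ≤ dHdH H μS μT := hd h hh fT hfT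
  have d2 : |a1 - b1| ≤ dHdH H μS μT := hd h hh fS hfS
  rw [abs_sub_le_iff] at t1 t2 d1 d2
  obtain ⟨t1a, t1b⟩ := t1
  obtain ⟨t2a, t2b⟩ := t2
  obtain ⟨d1a, d1b⟩ := d1
  obtain ⟨d2a, d2b⟩ := d2
  constructor <;> rw [abs_sub_le_iff] <;> constructor <;> linarith
end

section
/- (Noiseless population-level bound, regression case.) Let h ∈ H and suppose the joint distributions are noiseless, i.e., ε_S(h) = ε_{μ_S}(h, f_S) and ε_T(h) = ε_{μ_T}(h, f_T) for the labeling functions f_S, f_T. Then ε_T(h) ≤ ε_S(h) + d_H̃(μ_S, μ_T) + min( ∫ |f_S(z) − f_T(z)| dμ_S(z), ∫ |f_S(z) − f_T(z)| dμ_T(z) ). -/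
open MeasureTheory Set

section Aux

variable {Z : Type*} [MeasurableSpace Z]

lemma toReal_prob_le_one (μ : Measure Z) [IsProbabilityMeasure μ] (s : Set Z) :
    (μ s).toReal ≤ 1 := by
  have : μ s ≤ 1 := prob_le_one
  simpa using ENNReal.toReal_mono (by simp) this

lemma dHt_bddAbove (H : Set (Z → ℝ)) (μS μT : Measure Z)
    [IsProbabilityMeasure μS] [IsProbabilityMeasure μT] :
    BddAbove {x | ∃ g ∈ H, ∃ g' ∈ H, ∃ t ∈ Icc (0 : ℝ) 1,
      x = |(μS {z | t < |g z - g' z|}).toReal - (μT {z | t < |g z - g' z|}).toReal|} := by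
  refine ⟨1, ?_⟩
  rintro x ⟨g, -, g', -, t, -, rfl⟩
  have h1 := toReal_prob_le_one μS {z | t < |g z - g' z|}
  have h2 := toReal_prob_le_one μT {z | t < |g z - g' z|}
  have h3 : (0:ℝ) ≤ (μS {z | t < |g z - g' z|}).toReal := ENNReal.toReal_nonneg
  have h4 : (0:ℝ) ≤ (μT {z | t < |g z - g' z|}).toReal := ENNReal.toReal_nonneg
  rw [abs_le]; constructor <;> linarith

lemma abs_diff_le_dHt (H : Set (Z → ℝ)) (μS μT : Measure Z)
    [IsProbabilityMeasure μS] [IsProbabilityMeasure μT]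
    {g g' : Z → ℝ} (hg : g ∈ H) (hg' : g' ∈ H) {t : ℝ} (ht : t ∈ Icc (0:ℝ) 1) :
    |(μS {z | t < |g z - g' z|}).toReal - (μT {z | t < |g z - g' z|}).toReal|
      ≤ dHt H μS μT :=
  le_csSup (dHt_bddAbove H μS μT) ⟨g, hg, g', hg', t, ht, rfl⟩

lemma integrable_absdiff (μ : Measure Z) [IsProbabilityMeasure μ]
    {g g' : Z → ℝ} (hg : Measurable g) (hg' : Measurable g')
    (hgb : ∀ z, g z ∈ Icc (0:ℝ) 1) (hg'b : ∀ z, g' z ∈ Icc (0:ℝ) 1) :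
    Integrable (fun z => |g z - g' z|) μ := by
  refine Integrable.mono' (integrable_const 1) ((hg.sub hg').abs).aestronglyMeasurable
    (Filter.Eventually.of_forall fun z => ?_)
  have h1 := hgb z; have h2 := hg'b z
  simp only [mem_Icc] at h1 h2
  rw [Real.norm_eq_abs, abs_abs, abs_le]
  constructor <;> [linarith; linarith]

/-- Key discrepancy transfer lemma. -/
lemma key_transfer (H : Set (Z → ℝ)) (μS μT : Measure Z)
    [IsProbabilityMeasure μS] [IsProbabilityMeasure μT]
    (hH : ∀ g ∈ H, Measurable g ∧ ∀ z, g z ∈ Icc (0 : ℝ) 1)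
    {g g' : Z → ℝ} (hg : g ∈ H) (hg' : g' ∈ H) :
    ∫ z, |g z - g' z| ∂μT ≤ ∫ z, |g z - g' z| ∂μS + dHt H μS μT := by
  obtain ⟨hgm, hgb⟩ := hH g hg
  obtain ⟨hg'm, hg'b⟩ := hH g' hg'
  set F : Z → ℝ := fun z => |g z - g' z| with hF
  have hFb : ∀ z, F z ≤ 1 := by
    intro z
    have h1 := hgb z; have h2 := hg'b z
    simp only [mem_Icc] at h1 h2
    rw [hF, abs_le]; constructor <;> linarith
  have hFnn : 0 ≤ᵐ[μS] F := Filter.Eventually.of_forall fun z => abs_nonneg _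
  have hFnn' : 0 ≤ᵐ[μT] F := Filter.Eventually.of_forall fun z => abs_nonneg _
  have hintS : Integrable F μS := integrable_absdiff μS hgm hg'm hgb hg'b
  have hintT : Integrable F μT := integrable_absdiff μT hgm hg'm hgb hg'b
  -- layer cake with < sets over Ioc 0 1
  have layer : ∀ (μ : Measure Z) [IsProbabilityMeasure μ], Integrable F μ → 0 ≤ᵐ[μ] F →
      ∫ z, F z ∂μ = ∫ t in Ioc (0:ℝ) 1, (μ {z | t < F z}).toReal := by
    intro μ _ hint hnn
    rw [hint.integral_eq_integral_Ioc_meas_le hnn (Filter.Eventually.of_forall hFb)]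
    refine integral_congr_ae ?_
    have := meas_le_ae_eq_meas_lt (μ := μ) (volume.restrict (Ioc (0:ℝ) 1)) F
    filter_upwards [this] with t ht
    rw [measureReal_def, ht]
  rw [layer μT hintT hFnn', layer μS hintS hFnn]
  -- measurability/integrability of the slice functions
  have slice_meas : ∀ (μ : Measure Z), Measurable fun t : ℝ => (μ {z | t < F z}).toReal := by
    intro μ
    refine Measurable.ennreal_toReal ?_
    exact Antitone.measurable (fun _ _ hst => measure_mono (fun _ hz => lt_of_le_of_lt hst hz))
  have slice_int : ∀ (μ : Measure Z) [IsProbabilityMeasure μ],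
      IntegrableOn (fun t : ℝ => (μ {z | t < F z}).toReal) (Ioc (0:ℝ) 1) := by
    intro μ _
    refine Integrable.mono' (integrable_const 1) (slice_meas μ).aestronglyMeasurable
      (Filter.Eventually.of_forall fun t => ?_)
    rw [Real.norm_eq_abs, abs_of_nonneg ENNReal.toReal_nonneg]
    exact toReal_prob_le_one μ _
  have bound : ∀ t ∈ Ioc (0:ℝ) 1,
      (μT {z | t < F z}).toReal ≤ (μS {z | t < F z}).toReal + dHt H μS μT := by
    intro t ht
    have h := abs_diff_le_dHt H μS μT hg hg' (t := t) ⟨le_of_lt ht.1, ht.2⟩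
    have : -(dHt H μS μT) ≤ (μS {z | t < |g z - g' z|}).toReal
        - (μT {z | t < |g z - g' z|}).toReal := neg_le_of_abs_le h
    simpa [hF] using by linarith [this]
  calc ∫ t in Ioc (0:ℝ) 1, (μT {z | t < F z}).toReal
      ≤ ∫ t in Ioc (0:ℝ) 1, ((μS {z | t < F z}).toReal + dHt H μS μT) := by
        refine setIntegral_mono_on (slice_int μT) ((slice_int μS).add (integrable_const _))
          measurableSet_Ioc bound
    _ = (∫ t in Ioc (0:ℝ) 1, (μS {z | t < F z}).toReal) + dHt H μS μT := by
        rw [integral_add (slice_int μS) (integrable_const _)]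
        simp [Real.volume_Ioc]

end Aux

/-- Noiseless population-level bound, regression case: in the noiseless setting
where `ε_S(h) = ε_{μ_S}(h, f_S)` and `ε_T(h) = ε_{μ_T}(h, f_T)`,
`ε_T(h) ≤ ε_S(h) + d_H̃(μ_S, μ_T) + min(...)`. -/
theorem stmt_18 {Z : Type*} [MeasurableSpace Z]
    (μS μT : Measure Z) [IsProbabilityMeasure μS] [IsProbabilityMeasure μT]
    (H : Set (Z → ℝ)) (hHne : H.Nonempty)
    (hH : ∀ g ∈ H, Measurable g ∧ ∀ z, g z ∈ Icc (0 : ℝ) 1)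
    (fS fT : Z → ℝ) (hfS : fS ∈ H) (hfT : fT ∈ H)
    (h : Z → ℝ) (hh : h ∈ H) :
    ∫ z, |h z - fT z| ∂μT ≤
      (∫ z, |h z - fS z| ∂μS) + dHt H μS μT +
        min (∫ z, |fS z - fT z| ∂μS) (∫ z, |fS z - fT z| ∂μT) := by
  obtain ⟨hhm, hhb⟩ := hH h hh
  obtain ⟨hSm, hSb⟩ := hH fS hfS
  obtain ⟨hTm, hTb⟩ := hH fT hfT
  have tri : ∀ (μ : Measure Z) [IsProbabilityMeasure μ],
      ∫ z, |h z - fT z| ∂μ ≤ ∫ z, |h z - fS z| ∂μ + ∫ z, |fS z - fT z| ∂μ := by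
    intro μ _
    rw [← integral_add (integrable_absdiff μ hhm hSm hhb hSb)
      (integrable_absdiff μ hSm hTm hSb hTb)]
    refine integral_mono (integrable_absdiff μ hhm hTm hhb hTb)
      ((integrable_absdiff μ hhm hSm hhb hSb).add
        (integrable_absdiff μ hSm hTm hSb hTb)) fun z => ?_
    have : h z - fT z = (h z - fS z) + (fS z - fT z) := by ring
    rw [this]
    exact abs_add_le _ _
  rcases le_total (∫ z, |fS z - fT z| ∂μS) (∫ z, |fS z - fT z| ∂μT) with hmin | hmin
  · rw [min_eq_left hmin]
    calc ∫ z, |h z - fT z| ∂μT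
        ≤ ∫ z, |h z - fT z| ∂μS + dHt H μS μT := key_transfer H μS μT hH hh hfT
      _ ≤ (∫ z, |h z - fS z| ∂μS + ∫ z, |fS z - fT z| ∂μS) + dHt H μS μT := by
          linarith [tri μS]
      _ = (∫ z, |h z - fS z| ∂μS) + dHt H μS μT + ∫ z, |fS z - fT z| ∂μS := by ring
  · rw [min_eq_right hmin]
    calc ∫ z, |h z - fT z| ∂μT
        ≤ ∫ z, |h z - fS z| ∂μT + ∫ z, |fS z - fT z| ∂μT := tri μT
      _ ≤ (∫ z, |h z - fS z| ∂μS + dHt H μS μT) + ∫ z, |fS z - fT z| ∂μT := by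
          linarith [key_transfer H μS μT hH hh hfS]
      _ = (∫ z, |h z - fS z| ∂μS) + dHt H μS μT + ∫ z, |fS z - fT z| ∂μT := by ring
end
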